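/- arXiv:2012.11814 — 9 statements merged into one kernel-verified Lean document; each statement's English description precedes it below -/
import Mathlib

section
/- For any two unit vectors u, v in ℝ³, the intrinsic (induced length) distance between u and v in the unit sphere S² equals the angle between u and v. -/
open scoped ENNReal

/-!
A path `γ` on the unit sphere is at least as long as the angle between its endpoints: on a fine
subdivision the consecutive angles `θᵢ` add up to at least `∠ (γ a) (γ b)` by the triangle
inequality for angles, while each chord `2 sin (θᵢ / 2) ≥ θᵢ cos (θᵢ / 2)` is at least
`θᵢ √(1 - (ε / 2) ^ 2)` when all chords are shorter than `ε`; let `ε → 0`. Conversely, the arc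
`t ↦ cos (θ t) u + sin (θ t) w` of a great circle, with `w` a unit vector orthogonal to `u`, joins
`u` to `v` and is `θ`-Lipschitz, since a chord is never longer than its arc.
-/

open Real InnerProductGeometry Set Filter Topology Module
open scoped NNReal RealInnerProductSpace

theorem Real.mul_cos_le_sin {x : ℝ} (h₀ : 0 ≤ x) (h₁ : x ≤ π / 2) : x * cos x ≤ sin x := by
  rcases h₁.lt_or_eq with h₁ | rfl
  · have hcos : 0 < cos x := cos_pos_of_mem_Ioo ⟨by linarith [pi_pos], h₁⟩
    simpa [tan_eq_sin_div_cos, le_div_iff₀ hcos] using le_tan h₀ h₁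
  · simp

theorem exists_monotone_partition_dist_lt {E : Type*} [PseudoMetricSpace E] {f : ℝ → E}
    {a b : ℝ} (hab : a ≤ b) (hf : ContinuousOn f (Icc a b)) {ε : ℝ} (hε : 0 < ε) :
    ∃ (N : ℕ) (P : ℕ → ℝ), Monotone P ∧ (∀ i, P i ∈ Icc a b) ∧ P 0 = a ∧ P N = b ∧
      ∀ i, dist (f (P (i + 1))) (f (P i)) < ε := by
  obtain ⟨δ, hδ, hfδ⟩ :=
    Metric.uniformContinuousOn_iff.1 (isCompact_Icc.uniformContinuousOn_of_continuous hf) ε hε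
  obtain ⟨N, hN⟩ := Icc.addNSMul_eq_right hab (half_pos hδ)
  refine ⟨N, fun i ↦ Icc.addNSMul hab (δ / 2) i,
    fun i j hij ↦ Icc.monotone_addNSMul hab (half_pos hδ).le hij, fun i ↦ Subtype.prop _,
    Icc.addNSMul_zero hab, hN N le_rfl, fun i ↦ ?_⟩
  refine hfδ _ (Subtype.prop _) _ (Subtype.prop _) ?_
  calc dist _ _ ≤ |a + (i + 1) • (δ / 2) - (a + i • (δ / 2))| :=
        abs_projIcc_sub_projIcc hab
    _ < δ := by
        rw [add_sub_add_left_eq_sub, succ_nsmul, add_sub_cancel_left, abs_of_pos (half_pos hδ)]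
        exact half_lt_self hδ

section LowerBound

variable {V : Type*} [NormedAddCommGroup V] [InnerProductSpace ℝ V]

theorem angle_le_sum_angle {w : ℕ → V} (h₀ : w 0 ≠ 0) (n : ℕ) :
    angle (w 0) (w n) ≤ ∑ i ∈ Finset.range n, angle (w i) (w (i + 1)) := by
  induction n with
  | zero => simp [angle_self h₀]
  | succ n ih =>
    rw [Finset.sum_range_succ]
    linarith [angle_le_angle_add_angle (w 0) (w n) (w (n + 1))]

theorem norm_sub_eq_two_mul_sin_angle_div_two {x y : V} (hx : ‖x‖ = 1) (hy : ‖y‖ = 1) :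
    ‖x - y‖ = 2 * sin (angle x y / 2) := by
  have hsin : 0 ≤ sin (angle x y / 2) := sin_nonneg_of_nonneg_of_le_pi
    (by linarith [angle_nonneg x y]) (by linarith [angle_le_pi x y, pi_pos])
  have hsq : ‖x - y‖ ^ 2 = (2 * sin (angle x y / 2)) ^ 2 := by
    rw [sq, norm_sub_sq_eq_norm_sq_add_norm_sq_sub_two_mul_norm_mul_norm_mul_cos_angle, hx, hy,
      mul_pow, sin_sq_eq_half_sub, show 2 * (angle x y / 2) = angle x y by ring]
    ring
  exact (pow_left_inj₀ (norm_nonneg _) (by positivity) two_ne_zero).1 hsq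

theorem angle_mul_sqrt_le_norm_sub {x y : V} (hx : ‖x‖ = 1) (hy : ‖y‖ = 1) {ε : ℝ}
    (hxy : ‖x - y‖ ≤ ε) : angle x y * √(1 - (ε / 2) ^ 2) ≤ ‖x - y‖ := by
  set θ := angle x y
  have hchord := norm_sub_eq_two_mul_sin_angle_div_two hx hy
  have hθ₀ : 0 ≤ θ / 2 := by linarith [angle_nonneg x y]
  have hθπ : θ / 2 ≤ π / 2 := by linarith [angle_le_pi x y]
  have hcos : √(1 - (ε / 2) ^ 2) ≤ cos (θ / 2) := by
    rw [cos_eq_sqrt_one_sub_sin_sq (by linarith [pi_pos]) hθπ]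
    have hsin : 0 ≤ sin (θ / 2) := sin_nonneg_of_nonneg_of_le_pi hθ₀ (by linarith [pi_pos])
    exact sqrt_le_sqrt (by nlinarith)
  calc θ * √(1 - (ε / 2) ^ 2) ≤ θ * cos (θ / 2) :=
        mul_le_mul_of_nonneg_left hcos (angle_nonneg x y)
    _ = 2 * (θ / 2 * cos (θ / 2)) := by ring
    _ ≤ ‖x - y‖ := by rw [hchord]; linarith [mul_cos_le_sin hθ₀ hθπ]

variable {γ : ℝ → V} {a b : ℝ}

theorem ofReal_angle_mul_sqrt_le_eVariationOn (hab : a ≤ b) (hγ : ContinuousOn γ (Icc a b))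
    (hunit : ∀ t ∈ Icc a b, ‖γ t‖ = 1) {ε : ℝ} (hε : 0 < ε) :
    ENNReal.ofReal (angle (γ a) (γ b) * √(1 - (ε / 2) ^ 2)) ≤ eVariationOn γ (Icc a b) := by
  obtain ⟨N, P, hPmono, hPmem, hP₀, hPN, hPdist⟩ :=
    exists_monotone_partition_dist_lt hab hγ hε
  have hunitP (i : ℕ) : ‖γ (P i)‖ = 1 := hunit _ (hPmem i)
  have hchain : angle (γ a) (γ b) ≤ ∑ i ∈ Finset.range N, angle (γ (P i)) (γ (P (i + 1))) := by
    simpa [hP₀, hPN] using angle_le_sum_angle (w := fun i ↦ γ (P i))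
      (by rw [← norm_ne_zero_iff, hunitP]; exact one_ne_zero) N
  have hlocal (i : ℕ) :
      angle (γ (P i)) (γ (P (i + 1))) * √(1 - (ε / 2) ^ 2) ≤ dist (γ (P (i + 1))) (γ (P i)) := by
    have hchord := hPdist i
    rw [dist_comm, dist_eq_norm] at hchord ⊢
    exact angle_mul_sqrt_le_norm_sub (hunitP i) (hunitP (i + 1)) hchord.le
  calc ENNReal.ofReal (angle (γ a) (γ b) * √(1 - (ε / 2) ^ 2))
      ≤ ENNReal.ofReal (∑ i ∈ Finset.range N, dist (γ (P (i + 1))) (γ (P i))) := by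
        gcongr
        refine (mul_le_mul_of_nonneg_right hchain (sqrt_nonneg _)).trans ?_
        rw [Finset.sum_mul]
        exact Finset.sum_le_sum fun i _ ↦ hlocal i
    _ = ∑ i ∈ Finset.range N, edist (γ (P (i + 1))) (γ (P i)) := by
        rw [ENNReal.ofReal_sum_of_nonneg fun i _ ↦ dist_nonneg]
        simp only [edist_dist]
    _ ≤ eVariationOn γ (Icc a b) := eVariationOn.sum_le hPmono hPmem

theorem ofReal_angle_le_eVariationOn (hab : a ≤ b) (hγ : ContinuousOn γ (Icc a b))
    (hunit : ∀ t ∈ Icc a b, ‖γ t‖ = 1) :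
    ENNReal.ofReal (angle (γ a) (γ b)) ≤ eVariationOn γ (Icc a b) := by
  have hlim : Tendsto (fun ε : ℝ ↦ ENNReal.ofReal (angle (γ a) (γ b) * √(1 - (ε / 2) ^ 2)))
      (𝓝[>] 0) (𝓝 (ENNReal.ofReal (angle (γ a) (γ b)))) := by
    have hcont : Continuous fun ε : ℝ ↦ ENNReal.ofReal (angle (γ a) (γ b) * √(1 - (ε / 2) ^ 2)) :=
      ENNReal.continuous_ofReal.comp (by fun_prop)
    simpa using (hcont.tendsto 0).mono_left nhdsWithin_le_nhds
  exact le_of_tendsto hlim (eventually_nhdsWithin_of_forall (s := Ioi 0) fun ε hε ↦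
    ofReal_angle_mul_sqrt_le_eVariationOn hab hγ hunit hε)

end LowerBound

section GreatCircle

variable {V : Type*} [NormedAddCommGroup V] [InnerProductSpace ℝ V] {u w : V}

noncomputable def greatCircle (u w : V) (t : ℝ) : V := cos t • u + sin t • w

theorem inner_greatCircle (hu : ‖u‖ = 1) (hw : ‖w‖ = 1) (huw : ⟪u, w⟫ = 0) (s t : ℝ) :
    ⟪greatCircle u w s, greatCircle u w t⟫ = cos (s - t) := by
  simp only [greatCircle, inner_add_left, inner_add_right, real_inner_smul_left,
    real_inner_smul_right, real_inner_self_eq_norm_sq, hu, hw, huw, real_inner_comm u w, cos_sub]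
  ring

theorem norm_greatCircle (hu : ‖u‖ = 1) (hw : ‖w‖ = 1) (huw : ⟪u, w⟫ = 0) (t : ℝ) :
    ‖greatCircle u w t‖ = 1 := by
  have h := inner_greatCircle hu hw huw t t
  rw [real_inner_self_eq_norm_sq, sub_self, cos_zero] at h
  exact (pow_eq_one_iff_of_nonneg (norm_nonneg _) two_ne_zero).1 h

theorem lipschitzWith_greatCircle (hu : ‖u‖ = 1) (hw : ‖w‖ = 1) (huw : ⟪u, w⟫ = 0) :
    LipschitzWith 1 (greatCircle u w) := by
  refine LipschitzWith.of_dist_le_mul fun s t ↦ ?_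
  have hsq : ‖greatCircle u w s - greatCircle u w t‖ ^ 2 = 2 - 2 * cos (s - t) := by
    rw [norm_sub_sq_real, norm_greatCircle hu hw huw, norm_greatCircle hu hw huw,
      inner_greatCircle hu hw huw]
    ring
  have hcos := one_sub_sq_div_two_le_cos (x := s - t)
  rw [NNReal.coe_one, one_mul, dist_eq_norm, Real.dist_eq]
  exact (sq_le_sq₀ (norm_nonneg _) (abs_nonneg _)).1 (by rw [hsq, sq_abs]; linarith)

theorem eVariationOn_greatCircle_comp_mul_le (hu : ‖u‖ = 1) (hw : ‖w‖ = 1) (huw : ⟪u, w⟫ = 0)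
    {θ : ℝ} (hθ : 0 ≤ θ) :
    eVariationOn (fun t ↦ greatCircle u w (θ * t)) (Icc 0 1) ≤ ENNReal.ofReal θ := by
  have hmono : MonotoneOn (fun t : ℝ ↦ θ * t) (Icc 0 1) :=
    fun s _ t _ hst ↦ mul_le_mul_of_nonneg_left hst hθ
  calc eVariationOn (greatCircle u w ∘ fun t ↦ θ * t) (Icc 0 1)
      ≤ (1 : ℝ≥0) * eVariationOn (fun t : ℝ ↦ θ * t) (Icc 0 1) :=
        ((lipschitzWith_greatCircle hu hw huw).lipschitzOnWith (s := univ)).comp_eVariationOn_le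
          (mapsTo_univ _ _)
    _ ≤ ENNReal.ofReal θ := by
        simpa using (hmono.eVariationOn_eq (left_mem_Icc.2 zero_le_one)
          (right_mem_Icc.2 zero_le_one)).le

end GreatCircle

section UpperBound

variable {V : Type*} [NormedAddCommGroup V] [InnerProductSpace ℝ V] [FiniteDimensional ℝ V]

theorem exists_norm_eq_one_inner_eq_zero (h : 2 ≤ finrank ℝ V) (u : V) :
    ∃ w : V, ‖w‖ = 1 ∧ ⟪u, w⟫ = 0 := by
  have hspan : finrank ℝ (ℝ ∙ u) ≤ 1 := by
    simpa using finrank_span_le_card (R := ℝ) ({u} : Set V)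
  have hperp : 0 < finrank ℝ (ℝ ∙ u)ᗮ := by
    have := (ℝ ∙ u).finrank_add_finrank_orthogonal
    omega
  have : Nontrivial (ℝ ∙ u)ᗮ := nontrivial_of_finrank_pos hperp
  obtain ⟨w, hw⟩ := exists_ne (0 : (ℝ ∙ u)ᗮ)
  refine ⟨NormedSpace.normalize (w : V), NormedSpace.norm_normalize (by simpa using hw), ?_⟩
  rw [NormedSpace.normalize, real_inner_smul_right,
    Submodule.mem_orthogonal_singleton_iff_inner_right.1 w.2, mul_zero]

theorem exists_eq_cos_angle_smul_add_sin_angle_smul (h : 2 ≤ finrank ℝ V) {u v : V}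
    (hu : ‖u‖ = 1) (hv : ‖v‖ = 1) :
    ∃ w : V, ‖w‖ = 1 ∧ ⟪u, w⟫ = 0 ∧ v = cos (angle u v) • u + sin (angle u v) • w := by
  set θ := angle u v
  have hcos : cos θ = ⟪u, v⟫ := by rw [cos_angle, hu, hv]; ring
  set p := v - ⟪u, v⟫ • u with hp
  have hv_eq : v = cos θ • u + p := by rw [hcos, hp]; abel
  have hup : ⟪u, p⟫ = 0 := by
    rw [hp, inner_sub_right, real_inner_smul_right, real_inner_self_eq_norm_sq, hu]; ring
  have hnorm_p : ‖p‖ = sin θ := by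
    have hsq : ‖p‖ ^ 2 = sin θ ^ 2 := by
      rw [sin_sq, hcos, hp, norm_sub_sq_real, real_inner_smul_right, norm_smul, hu, hv,
        Real.norm_eq_abs, mul_one, sq_abs, real_inner_comm v u]
      ring
    exact (pow_left_inj₀ (norm_nonneg _) (sin_nonneg_of_nonneg_of_le_pi (angle_nonneg u v)
      (angle_le_pi u v)) two_ne_zero).1 hsq
  rcases eq_or_ne p 0 with hp0 | hp0
  -- `v = ± u`: every unit vector orthogonal to `u` gives a great circle through `u` and `v`.
  · obtain ⟨w, hw, huw⟩ := exists_norm_eq_one_inner_eq_zero h u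
    refine ⟨w, hw, huw, ?_⟩
    simpa [← hnorm_p, hp0] using hv_eq
  · refine ⟨NormedSpace.normalize p, NormedSpace.norm_normalize hp0, ?_, ?_⟩
    · rw [NormedSpace.normalize, real_inner_smul_right, hup, mul_zero]
    · rw [← hnorm_p, NormedSpace.norm_smul_normalize]
      exact hv_eq

theorem exists_path_eVariationOn_le_angle (h : 2 ≤ finrank ℝ V) {u v : V}
    (hu : ‖u‖ = 1) (hv : ‖v‖ = 1) :
    ∃ γ : ℝ → V, ContinuousOn γ (Icc 0 1) ∧ γ 0 = u ∧ γ 1 = v ∧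
      (∀ t ∈ Icc (0 : ℝ) 1, ‖γ t‖ = 1) ∧
      eVariationOn γ (Icc 0 1) ≤ ENNReal.ofReal (angle u v) := by
  obtain ⟨w, hw, huw, hv_eq⟩ := exists_eq_cos_angle_smul_add_sin_angle_smul h hu hv
  refine ⟨fun t ↦ greatCircle u w (angle u v * t), ?_, by simp [greatCircle], ?_,
    fun t _ ↦ norm_greatCircle hu hw huw _,
    eVariationOn_greatCircle_comp_mul_le hu hw huw (angle_nonneg u v)⟩
  · exact ((lipschitzWith_greatCircle hu hw huw).continuous.comp
      (continuous_const.mul continuous_id)).continuousOn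
  · simpa [greatCircle] using hv_eq.symm

end UpperBound

/-- The intrinsic (induced length) distance between two unit vectors `u`, `v` in the unit
sphere `S² ⊂ ℝ³` — the infimum of lengths of paths in the sphere connecting `u` to `v` —
equals the angle between `u` and `v`. -/
theorem intrinsic_sphere_dist_eq_angle
    (u v : EuclideanSpace ℝ (Fin 3)) (hu : ‖u‖ = 1) (hv : ‖v‖ = 1) :
    sInf {L : ℝ≥0∞ | ∃ γ : ℝ → EuclideanSpace ℝ (Fin 3),
        ContinuousOn γ (Set.Icc 0 1) ∧
        γ 0 = u ∧ γ 1 = v ∧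
        (∀ t ∈ Set.Icc (0:ℝ) 1, ‖γ t‖ = 1) ∧
        L = eVariationOn γ (Set.Icc 0 1)}
      = ENNReal.ofReal (InnerProductGeometry.angle u v) := by
  apply le_antisymm
  · obtain ⟨γ, hγ, h₀, h₁, hunit, hlen⟩ := exists_path_eVariationOn_le_angle (by simp) hu hv
    exact sInf_le_of_le ⟨γ, hγ, h₀, h₁, hunit, rfl⟩ hlen
  · refine le_sInf ?_
    rintro L ⟨γ, hγ, rfl, rfl, hunit, rfl⟩
    exact ofReal_angle_le_eVariationOn zero_le_one hγ hunit
end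

section
/- Crofton's formula in the plane: for any smooth curve γ : [a,b] → ℝ², its length equals (π/2) times the average over unit vectors u ∈ S¹ of the length of the projection curve γ_u(t) = ⟨γ(t), u⟩ u. -/
open Real MeasureTheory intervalIntegral

lemma integral_abs_cos : ∫ θ in (0:ℝ)..(2*π), |Real.cos θ| = 4 := by
  have hI : ∀ u v : ℝ, IntervalIntegrable (fun θ => |Real.cos θ|) volume u v :=
    fun u v => (continuous_abs.comp Real.continuous_cos).intervalIntegrable _ _
  have s1 := integral_add_adjacent_intervals (hI 0 (π/2)) (hI (π/2) (3*π/2))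
  have s2 := integral_add_adjacent_intervals (hI 0 (3*π/2)) (hI (3*π/2) (2*π))
  have pi_pos := Real.pi_pos
  have e1 : ∫ θ in (0:ℝ)..(π/2), |Real.cos θ| = 1 := by
    rw [integral_congr (g := Real.cos) ?_, integral_cos]
    · simp
    · intro x hx
      rw [Set.uIcc_of_le (by linarith)] at hx
      exact abs_of_nonneg (Real.cos_nonneg_of_mem_Icc ⟨by linarith [hx.1], hx.2⟩)
  have e2 : ∫ θ in (π/2)..(3*π/2), |Real.cos θ| = 2 := by
    rw [integral_congr (g := fun θ => -Real.cos θ) ?_, intervalIntegral.integral_neg, integral_cos]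
    · have h32 : Real.sin (3*π/2) = -1 := by
        rw [show (3:ℝ)*π/2 = π + π/2 by ring, Real.sin_add]; simp
      rw [h32]; simp; norm_num
    · intro x hx
      rw [Set.uIcc_of_le (by linarith)] at hx
      have := Real.cos_nonpos_of_pi_div_two_le_of_le hx.1 (by linarith [hx.2])
      simpa using abs_of_nonpos this
  have e3 : ∫ θ in (3*π/2)..(2*π), |Real.cos θ| = 1 := by
    rw [integral_congr (g := Real.cos) ?_, integral_cos]
    · have h32 : Real.sin (3*π/2) = -1 := by
        rw [show (3:ℝ)*π/2 = π + π/2 by ring, Real.sin_add]; simp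
      rw [Real.sin_two_pi, h32]; norm_num
    · intro x hx
      rw [Set.uIcc_of_le (by linarith)] at hx
      have hmem : x - 2*π ∈ Set.Icc (-(π/2)) (π/2) :=
        ⟨by linarith [hx.1], by linarith [hx.2]⟩
      show |Real.cos x| = Real.cos x
      rw [show Real.cos x = Real.cos (x - 2*π) from (Real.cos_sub_two_pi x).symm]
      exact abs_of_nonneg (Real.cos_nonneg_of_mem_Icc hmem)
  rw [e1, e2] at s1
  rw [← s2, ← s1, e3]; norm_num

lemma integral_abs_cos_shift (φ : ℝ) : ∫ θ in (0:ℝ)..(2*π), |Real.cos (θ - φ)| = 4 := by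
  rw [intervalIntegral.integral_comp_sub_right (fun x => |Real.cos x|) φ]
  have hper : Function.Periodic (fun x => |Real.cos x|) (2*π) := Real.cos_periodic.comp abs
  have := hper.intervalIntegral_add_eq (0 - φ) 0
  rw [show (0:ℝ) - φ + 2*π = 2*π - φ by ring, zero_add] at this
  rw [this, integral_abs_cos]

lemma integral_abs_lin (w0 w1 : ℝ) :
    ∫ θ in (0:ℝ)..(2*π), |w0 * Real.cos θ + w1 * Real.sin θ| = 4 * Real.sqrt (w0^2 + w1^2) := by
  by_cases hz : (⟨w0, w1⟩ : ℂ) = 0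
  · have h0 : w0 = 0 := congrArg Complex.re hz
    have h1 : w1 = 0 := congrArg Complex.im hz
    simp [h0, h1]
  · set z : ℂ := ⟨w0, w1⟩ with hzdef
    set r : ℝ := ‖z‖ with hr
    have hrpos : 0 < r := norm_pos_iff.mpr hz
    have habs : r = Real.sqrt (w0^2 + w1^2) := by
      rw [hr, Complex.norm_def, Complex.normSq_apply]; ring_nf; rfl
    have hcos : Real.cos z.arg = w0 / r := Complex.cos_arg hz
    have hsin : Real.sin z.arg = w1 / r := Complex.sin_arg z
    have hw0 : w0 = r * Real.cos z.arg := by rw [hcos]; field_simp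
    have hw1 : w1 = r * Real.sin z.arg := by rw [hsin]; field_simp
    calc ∫ θ in (0:ℝ)..(2*π), |w0 * Real.cos θ + w1 * Real.sin θ|
        = ∫ θ in (0:ℝ)..(2*π), r * |Real.cos (θ - z.arg)| := by
          apply intervalIntegral.integral_congr
          intro x _
          show |w0 * Real.cos x + w1 * Real.sin x| = r * |Real.cos (x - z.arg)|
          have key : w0 * Real.cos x + w1 * Real.sin x = r * Real.cos (x - z.arg) := by
            rw [Real.cos_sub, hw0, hw1]; ring
          rw [key, abs_mul, abs_of_pos hrpos]
      _ = r * ∫ θ in (0:ℝ)..(2*π), |Real.cos (θ - z.arg)| := intervalIntegral.integral_const_mul _ _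
      _ = 4 * Real.sqrt (w0^2 + w1^2) := by rw [integral_abs_cos_shift, habs]; ring

/-- Crofton's formula in the plane: for any smooth curve `γ : [a,b] → ℝ²`, its length
equals `π/2` times the average over unit vectors `u ∈ S¹` of the length of the projection
of `γ` to the line spanned by `u`. -/
theorem crofton_formula_plane
    (a b : ℝ) (hab : a ≤ b)
    (γ : ℝ → EuclideanSpace ℝ (Fin 2)) (hγ : ContDiff ℝ (⊤ : ℕ∞) γ) :
    ∫ t in a..b, ‖deriv γ t‖ =
      (Real.pi / 2) * ((1 / (2 * Real.pi)) *
        ∫ θ in (0:ℝ)..(2 * Real.pi),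
          ∫ t in a..b,
            |(inner ℝ (deriv γ t)
                (WithLp.toLp 2 (![Real.cos θ, Real.sin θ] : Fin 2 → ℝ) :
                  EuclideanSpace ℝ (Fin 2)) : ℝ)|) := by
  have hd : Continuous (deriv γ) := hγ.continuous_deriv (by simp)
  have h0 : Continuous fun t => deriv γ t 0 := (continuous_apply (0 : Fin 2)).comp ((PiLp.continuous_ofLp 2 _).comp hd)
  have h1 : Continuous fun t => deriv γ t 1 := (continuous_apply (1 : Fin 2)).comp ((PiLp.continuous_ofLp 2 _).comp hd)
  have hinner : ∀ t θ : ℝ, |(inner ℝ (deriv γ t)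
        (WithLp.toLp 2 (![Real.cos θ, Real.sin θ] : Fin 2 → ℝ) : EuclideanSpace ℝ (Fin 2)) : ℝ)|
      = |deriv γ t 0 * Real.cos θ + deriv γ t 1 * Real.sin θ| := by
    intro t θ
    congr 1
    simp [PiLp.inner_apply, Fin.sum_univ_two]; ring
  have hnorm : ∀ t : ℝ, ‖deriv γ t‖ = Real.sqrt ((deriv γ t 0)^2 + (deriv γ t 1)^2) := by
    intro t
    rw [EuclideanSpace.norm_eq]
    simp [Fin.sum_univ_two, Real.norm_eq_abs, sq_abs]
  have h2pi : (0:ℝ) ≤ 2*π := by positivity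
  have hf : Continuous (fun p : ℝ × ℝ =>
      |deriv γ p.2 0 * Real.cos p.1 + deriv γ p.2 1 * Real.sin p.1|) := by fun_prop
  have hswap :
      ∫ θ in Set.Ioc (0:ℝ) (2*π), ∫ t in Set.Ioc a b,
          |deriv γ t 0 * Real.cos θ + deriv γ t 1 * Real.sin θ|
        = ∫ t in Set.Ioc a b, ∫ θ in Set.Ioc (0:ℝ) (2*π),
          |deriv γ t 0 * Real.cos θ + deriv γ t 1 * Real.sin θ| := by
    apply integral_integral_swap
    rw [Measure.prod_restrict]
    exact ((hf.continuousOn.integrableOn_compact (isCompact_Icc.prod isCompact_Icc)).mono_set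
      (Set.prod_mono Set.Ioc_subset_Icc_self Set.Ioc_subset_Icc_self))
  have key : (∫ θ in (0:ℝ)..(2*π), ∫ t in a..b,
        |(inner ℝ (deriv γ t) (WithLp.toLp 2 (![Real.cos θ, Real.sin θ] : Fin 2 → ℝ) :
          EuclideanSpace ℝ (Fin 2)) : ℝ)|)
      = 4 * ∫ t in a..b, ‖deriv γ t‖ := by
    calc (∫ θ in (0:ℝ)..(2*π), ∫ t in a..b,
          |(inner ℝ (deriv γ t) (WithLp.toLp 2 (![Real.cos θ, Real.sin θ] : Fin 2 → ℝ) :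
            EuclideanSpace ℝ (Fin 2)) : ℝ)|)
        = ∫ θ in (0:ℝ)..(2*π), ∫ t in a..b,
            |deriv γ t 0 * Real.cos θ + deriv γ t 1 * Real.sin θ| := by
          simp only [hinner]
      _ = ∫ t in Set.Ioc a b, ∫ θ in Set.Ioc (0:ℝ) (2*π),
            |deriv γ t 0 * Real.cos θ + deriv γ t 1 * Real.sin θ| := by
          rw [intervalIntegral.integral_of_le h2pi, ← hswap]
          apply setIntegral_congr_fun measurableSet_Ioc
          intro θ _
          exact intervalIntegral.integral_of_le hab
      _ = ∫ t in Set.Ioc a b, 4 * ‖deriv γ t‖ := by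
          apply setIntegral_congr_fun measurableSet_Ioc
          intro t _
          show (∫ θ in Set.Ioc (0:ℝ) (2*π),
              |deriv γ t 0 * Real.cos θ + deriv γ t 1 * Real.sin θ|) = 4 * ‖deriv γ t‖
          rw [← intervalIntegral.integral_of_le h2pi, integral_abs_lin, hnorm]
      _ = 4 * ∫ t in a..b, ‖deriv γ t‖ := by
          rw [intervalIntegral.integral_of_le hab, MeasureTheory.integral_const_mul]
  rw [key]
  have hπ : π ≠ 0 := Real.pi_ne_zero
  field_simp
  ring
end

section
/- Fenchel's theorem: the total curvature of any closed smooth regular space curve is at least 2π. -/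
open Real MeasureTheory intervalIntegral

local notation "E3" => EuclideanSpace ℝ (Fin 3)
local notation "⟪" x ", " y "⟫" => @inner ℝ _ _ x y

/-- The derivative of a unit-norm curve is orthogonal to the curve. -/
lemma fenchel_aux_orth {T : ℝ → E3} (hTd : Differentiable ℝ T)
    (hu : ∀ t, ‖T t‖ = 1) (t : ℝ) : ⟪T t, deriv T t⟫ = 0 := by
  have h1 : HasDerivAt (fun s => ⟪T s, T s⟫) (⟪T t, deriv T t⟫ + ⟪deriv T t, T t⟫) t :=
    HasDerivAt.inner ℝ (hTd t).hasDerivAt (hTd t).hasDerivAt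
  have h2 : (fun s => ⟪T s, T s⟫) = fun _ : ℝ => (1 : ℝ) := by
    funext s
    rw [real_inner_self_eq_norm_sq, hu s]; norm_num
  rw [h2] at h1
  have h3 : (⟪T t, deriv T t⟫ + ⟪deriv T t, T t⟫ : ℝ) = 0 :=
    h1.unique (hasDerivAt_const t 1)
  have h4 : (⟪T t, deriv T t⟫ : ℝ) = ⟪deriv T t, T t⟫ := real_inner_comm _ _
  linarith

/-- Key Lipschitz estimate: along a unit-sphere curve, the κ-damped arccos-distance to a fixed
unit vector `q` changes no faster than the speed. -/
lemma fenchel_aux_lip {T : ℝ → E3} (hT : ContDiff ℝ (⊤ : ℕ∞) T)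
    (hu : ∀ t, ‖T t‖ = 1) {κ : ℝ} (hκ0 : 0 < κ) (hκ1 : κ < 1)
    {q : E3} (hq : ‖q‖ = 1) {a b : ℝ} (hab : a ≤ b) :
    |Real.arccos (κ * ⟪q, T b⟫) - Real.arccos (κ * ⟪q, T a⟫)|
      ≤ ∫ s in a..b, ‖deriv T s‖ := by
  have hTd : Differentiable ℝ T := hT.differentiable (by simp)
  have hT' : Continuous (deriv T) := (contDiff_infty_iff_deriv.mp hT).2.continuous
  set f : ℝ → ℝ := fun t => ⟪q, T t⟫ with hf
  have hfc : Continuous f := continuous_const.inner hT.continuous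
  have hfd : ∀ t, HasDerivAt f ⟪q, deriv T t⟫ t := by
    intro t
    have := HasDerivAt.inner ℝ (hasDerivAt_const t q) (hTd t).hasDerivAt
    simpa using this
  have hf1 : ∀ t, |f t| ≤ 1 := by
    intro t
    calc |f t| ≤ ‖q‖ * ‖T t‖ := abs_real_inner_le_norm q (T t)
    _ = 1 := by rw [hq, hu t]; ring
  -- bound |f'| ≤ ‖T'‖ √(1 - f²)
  have hder : ∀ t, |⟪q, deriv T t⟫| ≤ ‖deriv T t‖ * Real.sqrt (1 - f t ^ 2) := by
    intro t
    have horth := fenchel_aux_orth hTd hu t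
    have h1 : (⟪q, deriv T t⟫ : ℝ) = ⟪q - f t • T t, deriv T t⟫ := by
      rw [inner_sub_left, real_inner_smul_left, horth]; ring
    have h2 : ‖q - f t • T t‖ ^ 2 = 1 - f t ^ 2 := by
      have e1 : (⟪q, T t⟫ : ℝ) = f t := rfl
      rw [norm_sub_sq_real, real_inner_smul_right, norm_smul, hq, hu t,
        Real.norm_eq_abs, e1, mul_one, sq_abs]
      ring
    have h3 : ‖q - f t • T t‖ = Real.sqrt (1 - f t ^ 2) := by
      rw [← h2, Real.sqrt_sq_eq_abs, abs_of_nonneg (norm_nonneg _)]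
    calc |⟪q, deriv T t⟫| = |⟪q - f t • T t, deriv T t⟫| := by rw [h1]
      _ ≤ ‖q - f t • T t‖ * ‖deriv T t‖ := abs_real_inner_le_norm _ _
      _ = ‖deriv T t‖ * Real.sqrt (1 - f t ^ 2) := by rw [h3]; ring
  -- the composed function and its derivative
  set F : ℝ → ℝ := fun t => Real.arccos (κ * f t) with hF
  set F' : ℝ → ℝ := fun t => -(1 / Real.sqrt (1 - (κ * f t) ^ 2)) * (κ * ⟪q, deriv T t⟫)
    with hF'
  have hbound : ∀ t, |κ * f t| < 1 := by
    intro t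
    calc |κ * f t| = κ * |f t| := by rw [abs_mul, abs_of_pos hκ0]
      _ ≤ κ * 1 := by nlinarith [hf1 t]
      _ < 1 := by linarith
  have hFd : ∀ t, HasDerivAt F (F' t) t := by
    intro t
    have h1 : κ * f t ≠ -1 := by
      intro h; have := hbound t; rw [h] at this; simp at this
    have h2 : κ * f t ≠ 1 := by
      intro h; have := hbound t; rw [h] at this; simp at this
    have harc := Real.hasDerivAt_arccos h1 h2
    have hg : HasDerivAt (fun t => κ * f t) (κ * ⟪q, deriv T t⟫) t := (hfd t).const_mul κ
    have hc := harc.comp t hg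
    exact hc
  have hsq : ∀ t, (0:ℝ) < 1 - (κ * f t) ^ 2 := by
    intro t
    have := hbound t
    nlinarith [abs_nonneg (κ * f t), sq_abs (κ * f t)]
  have hF'bound : ∀ t, |F' t| ≤ ‖deriv T t‖ := by
    intro t
    have h2 : Real.sqrt (1 - (κ * f t) ^ 2) > 0 := Real.sqrt_pos.mpr (hsq t)
    have key : κ * Real.sqrt (1 - f t ^ 2) ≤ Real.sqrt (1 - (κ * f t) ^ 2) := by
      have h4 : (0:ℝ) ≤ 1 - f t ^ 2 := by nlinarith [hf1 t, sq_abs (f t), abs_nonneg (f t)]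
      rw [show κ * Real.sqrt (1 - f t ^ 2)
          = Real.sqrt (κ ^ 2 * (1 - f t ^ 2)) by
        rw [Real.sqrt_mul (sq_nonneg κ), Real.sqrt_sq hκ0.le]]
      apply Real.sqrt_le_sqrt
      nlinarith
    have habs : |F' t| = (κ * |⟪q, deriv T t⟫|) / Real.sqrt (1 - (κ * f t) ^ 2) := by
      rw [hF']
      rw [abs_mul, abs_mul, abs_neg, abs_div, abs_one, abs_of_pos hκ0,
        abs_of_pos h2]
      ring
    rw [habs, div_le_iff₀ h2]
    calc κ * |⟪q, deriv T t⟫| ≤ κ * (‖deriv T t‖ * Real.sqrt (1 - f t ^ 2)) := by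
          nlinarith [hder t]
      _ = ‖deriv T t‖ * (κ * Real.sqrt (1 - f t ^ 2)) := by ring
      _ ≤ ‖deriv T t‖ * Real.sqrt (1 - (κ * f t) ^ 2) := by
          nlinarith [norm_nonneg (deriv T t), key, Real.sqrt_nonneg (1 - f t ^ 2)]
  have hF'c : Continuous F' := by
    apply Continuous.mul
    · apply Continuous.neg
      apply Continuous.div continuous_const
      · exact (continuous_const.sub ((continuous_const.mul hfc).pow 2)).sqrt
      · intro t
        exact (Real.sqrt_pos.mpr (hsq t)).ne'
    · exact continuous_const.mul (continuous_const.inner hT')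
  have hFTC : ∫ s in a..b, F' s = F b - F a :=
    intervalIntegral.integral_eq_sub_of_hasDerivAt (fun t _ => hFd t)
      (hF'c.intervalIntegrable a b)
  rw [hF] at hFTC
  rw [← hFTC]
  calc |∫ s in a..b, F' s| ≤ ∫ s in a..b, |F' s| :=
        intervalIntegral.abs_integral_le_integral_abs hab
    _ ≤ ∫ s in a..b, ‖deriv T s‖ := by
        apply intervalIntegral.integral_mono_on hab
          (hF'c.abs.intervalIntegrable a b) (hT'.norm.intervalIntegrable a b)
        exact fun t _ => hF'bound t

/-- Spherical-distance-type bound between two points of a unit-sphere curve. -/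
lemma fenchel_aux_dist {T : ℝ → E3} (hT : ContDiff ℝ (⊤ : ℕ∞) T)
    (hu : ∀ t, ‖T t‖ = 1) {κ : ℝ} (hκ0 : 0 < κ) (hκ1 : κ < 1) {a b : ℝ} (hab : a ≤ b) :
    Real.arccos (κ * ⟪T a, T b⟫) ≤ Real.arccos κ + ∫ s in a..b, ‖deriv T s‖ := by
  have h := fenchel_aux_lip hT hu hκ0 hκ1 (hu a) hab
  have e : (⟪T a, T a⟫ : ℝ) = 1 := by
    rw [real_inner_self_eq_norm_sq, hu a]; norm_num
  rw [e, mul_one] at h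
  have h2 := (abs_le.mp h).2
  linarith

/-- Fenchel's theorem: the total curvature of any closed smooth regular space curve is at
least `2π`.  Here the curve is given by a smooth unit-speed `ℓ`-periodic map
`γ : ℝ → ℝ³`, and its total curvature is `∫₀^ℓ ‖γ''(s)‖ ds`. -/
theorem fenchel_total_curvature_ge_two_pi
    (ℓ : ℝ) (hℓ : 0 < ℓ)
    (γ : ℝ → EuclideanSpace ℝ (Fin 3)) (hγ : ContDiff ℝ (⊤ : ℕ∞) γ)
    (hper : ∀ t, γ (t + ℓ) = γ t)
    (hunit : ∀ t, ‖deriv γ t‖ = 1) :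
    2 * Real.pi ≤ ∫ s in (0:ℝ)..ℓ, ‖deriv (deriv γ) s‖ := by
  by_contra hcon
  push_neg at hcon
  have hγ' : ContDiff ℝ (⊤ : ℕ∞) γ := hγ.of_le (by simp)
  set T := deriv γ with hTdef
  have hT : ContDiff ℝ (⊤ : ℕ∞) T := (contDiff_infty_iff_deriv.mp hγ').2
  have hγd : Differentiable ℝ γ := hγ'.differentiable (by simp)
  have hTd : Differentiable ℝ T := hT.differentiable (by simp)
  have hTc : Continuous T := hT.continuous
  have hT' : Continuous (deriv T) := (contDiff_infty_iff_deriv.mp hT).2.continuous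
  have hTu : ∀ t, ‖T t‖ = 1 := hunit
  -- the tangent indicatrix is periodic
  have hTper : ∀ t, T (t + ℓ) = T t := by
    intro t
    have h1 : (fun x => γ (x + ℓ)) = γ := funext hper
    have h2 : deriv (fun x => γ (x + ℓ)) t = deriv γ (t + ℓ) := deriv_comp_add_const γ ℓ t
    rw [h1] at h2
    exact h2.symm
  have hTint : ∀ a b : ℝ, IntervalIntegrable T MeasureTheory.volume a b :=
    fun a b => hTc.intervalIntegrable a b
  have hT'int : ∀ a b : ℝ, IntervalIntegrable (fun s => ‖deriv T s‖) MeasureTheory.volume a b :=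
    fun a b => hT'.norm.intervalIntegrable a b
  -- the integral of T over a period vanishes
  have hintT : (∫ u in (0:ℝ)..ℓ, T u) = 0 := by
    have h1 : (∫ u in (0:ℝ)..ℓ, deriv γ u) = γ ℓ - γ 0 :=
      intervalIntegral.integral_deriv_eq_sub (fun x _ => hγd x) (hTint 0 ℓ)
    have h2 : γ ℓ = γ 0 := by have := hper 0; rwa [zero_add] at this
    rw [← hTdef] at h1
    rw [h1, h2, sub_self]
  set L := ∫ u in (0:ℝ)..ℓ, ‖deriv T u‖ with hLdef
  have hL2 : L < 2 * Real.pi := hcon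
  have hL0 : 0 ≤ L := intervalIntegral.integral_nonneg hℓ.le (fun x _ => norm_nonneg _)
  set r : ℝ := (Real.pi - L / 2) / 2 with hrdef
  have hpi := Real.pi_pos
  have hr0 : 0 < r := by rw [hrdef]; linarith
  have hrpi : r ≤ Real.pi / 2 := by rw [hrdef]; linarith
  set κ : ℝ := Real.cos (r / 2) with hκdef
  have hκ0 : 0 < κ :=
    Real.cos_pos_of_mem_Ioo ⟨by linarith, by linarith⟩
  have hκ1 : κ < 1 := by
    refine lt_of_le_of_ne (Real.cos_le_one _) ?_
    intro h
    have := (Real.cos_eq_one_iff_of_lt_of_lt (by linarith) (by linarith)).mp h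
    linarith
  have hδ : Real.arccos κ = r / 2 :=
    Real.arccos_cos (by linarith) (by linarith)
  -- the arclength function of the tangent indicatrix
  set s : ℝ → ℝ := fun t => ∫ u in (0:ℝ)..t, ‖deriv T u‖ with hsdef
  have hscont : Continuous s := by
    have hd : Differentiable ℝ s := fun t =>
      ((hT'.norm.integral_hasStrictDerivAt 0 t).hasDerivAt).differentiableAt
    exact hd.continuous
  have hs0 : s 0 = 0 := intervalIntegral.integral_same
  have hsl : s ℓ = L := rfl
  obtain ⟨a, ha, hsa⟩ : ∃ a ∈ Set.Icc (0:ℝ) ℓ, s a = L / 2 := by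
    have hIcc := intermediate_value_Icc hℓ.le hscont.continuousOn
    have hmem : L / 2 ∈ Set.Icc (s 0) (s ℓ) := by
      rw [hs0, hsl]; constructor <;> linarith
    obtain ⟨a, ha, h⟩ := hIcc hmem
    exact ⟨a, ha, h⟩
  have hsplit : ∀ u v : ℝ, (∫ x in u..v, ‖deriv T x‖) = s v - s u := by
    intro u v
    have h := intervalIntegral.integral_add_adjacent_intervals (hT'int 0 u) (hT'int u v)
    have hu' : s u = ∫ x in (0:ℝ)..u, ‖deriv T x‖ := rfl
    have hv' : s v = ∫ x in (0:ℝ)..v, ‖deriv T x‖ := rfl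
    rw [hu', hv', ← h]; ring
  -- distance bound along the curve
  have hdb : ∀ u v : ℝ, u ≤ v →
      Real.arccos (κ * ⟪T u, T v⟫) ≤ r / 2 + (s v - s u) := by
    intro u v huv
    have h := fenchel_aux_dist hT hTu hκ0 hκ1 huv
    rw [hδ, hsplit u v] at h
    exact h
  -- T 0 and T a are not antipodal
  have hinner_ge : ∀ u v : ℝ, (-1:ℝ) ≤ ⟪T u, T v⟫ := by
    intro u v
    have := abs_real_inner_le_norm (T u) (T v)
    rw [hTu u, hTu v, one_mul] at this
    linarith [(abs_le.mp this).1]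
  have hpq : (-1 : ℝ) < ⟪T 0, T a⟫ := by
    rcases lt_or_eq_of_le (hinner_ge 0 a) with h | h
    · exact h
    · exfalso
      have h2 := hdb 0 a ha.1
      rw [← h, show κ * (-1:ℝ) = -κ by ring, Real.arccos_neg, hδ, hsa, hs0] at h2
      rw [hrdef] at h2
      linarith
  have hpq_ne : T 0 + T a ≠ 0 := by
    intro h
    have h1 : T 0 = -T a := by
      rw [add_eq_zero_iff_eq_neg] at h; exact h
    have h2 : (⟪T 0, T a⟫ : ℝ) = -1 := by
      rw [h1, inner_neg_left, real_inner_self_eq_norm_sq, hTu a]; norm_num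
    rw [h2] at hpq; linarith
  set n := ‖T 0 + T a‖ with hndef
  have hn0 : 0 < n := by rw [hndef]; exact norm_pos_iff.mpr hpq_ne
  set m := n⁻¹ • (T 0 + T a) with hmdef
  set c : ℝ → ℝ := fun t => ⟪m, T t⟫ with hcdef
  have hcc : Continuous c := continuous_const.inner hTc
  have hc_expand : ∀ t, c t = n⁻¹ * (⟪T 0, T t⟫ + ⟪T a, T t⟫) := by
    intro t
    have : c t = ⟪n⁻¹ • (T 0 + T a), T t⟫ := rfl
    rw [this, real_inner_smul_left, inner_add_left]
  have hc0 : 0 < c 0 := by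
    rw [hc_expand 0]
    have h1 : (⟪T 0, T 0⟫ : ℝ) = 1 := by
      rw [real_inner_self_eq_norm_sq, hTu 0]; norm_num
    have h2 : (⟪T a, T 0⟫ : ℝ) = ⟪T 0, T a⟫ := real_inner_comm _ _
    rw [h1, h2]
    have : (0:ℝ) < 1 + ⟪T 0, T a⟫ := by linarith
    positivity
  -- main claim: the curve stays in the open hemisphere around m
  have hclaim : ∀ t ∈ Set.Icc (0:ℝ) ℓ, 0 < c t := by
    by_contra h
    push_neg at h
    obtain ⟨t₀, ht₀, hct₀⟩ := h
    obtain ⟨t₁, ht₁, hct₁⟩ : ∃ t₁ ∈ Set.Icc (0:ℝ) t₀, c t₁ = 0 := by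
      have hIcc := intermediate_value_Icc' ht₀.1 hcc.continuousOn
      have h0 : (0:ℝ) ∈ Set.Icc (c t₀) (c 0) := ⟨hct₀, hc0.le⟩
      obtain ⟨t₁, ht₁, h⟩ := hIcc h0
      exact ⟨t₁, ht₁, h⟩
    have ht₁ℓ : t₁ ≤ ℓ := le_trans ht₁.2 ht₀.2
    have hxpq : (⟪T 0, T t₁⟫ : ℝ) = -⟪T a, T t₁⟫ := by
      have h1 := hct₁
      rw [hc_expand t₁] at h1
      have h2 : (⟪T 0, T t₁⟫ : ℝ) + ⟪T a, T t₁⟫ = 0 :=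
        (mul_eq_zero.mp h1).resolve_left (inv_ne_zero hn0.ne')
      linarith
    rcases le_total t₁ a with hta | hta
    · have h1 := hdb 0 t₁ ht₁.1
      have h2 := hdb t₁ a hta
      have hpi' : Real.arccos (κ * ⟪T 0, T t₁⟫) + Real.arccos (κ * ⟪T t₁, T a⟫) = Real.pi := by
        have e1 : (⟪T 0, T t₁⟫ : ℝ) = -⟪T t₁, T a⟫ :=
          hxpq.trans (neg_inj.mpr (real_inner_comm _ _))
        rw [e1, show κ * -⟪T t₁, T a⟫ = -(κ * ⟪T t₁, T a⟫) by ring, Real.arccos_neg]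
        ring
      rw [hs0] at h1
      rw [hsa] at h2
      rw [hrdef] at h1 h2
      linarith
    · have hTℓ : T ℓ = T 0 := by have := hTper 0; rwa [zero_add] at this
      have h1 := hdb a t₁ hta
      have h2 := hdb t₁ ℓ ht₁ℓ
      have hpi' : Real.arccos (κ * ⟪T a, T t₁⟫) + Real.arccos (κ * ⟪T t₁, T ℓ⟫) = Real.pi := by
        have e1 : (⟪T t₁, T ℓ⟫ : ℝ) = -⟪T a, T t₁⟫ := by
          rw [hTℓ]; exact (real_inner_comm _ _).trans hxpq
        rw [e1, show κ * -⟪T a, T t₁⟫ = -(κ * ⟪T a, T t₁⟫) by ring, Real.arccos_neg]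
        ring
      rw [hsa] at h1
      rw [hsl] at h2
      rw [hrdef] at h1 h2
      linarith
  -- contradiction: the mean of T is zero, yet ⟪m, T⟫ > 0 on the period
  have hpos : 0 < ∫ t in (0:ℝ)..ℓ, c t :=
    intervalIntegral.intervalIntegral_pos_of_pos_on (hcc.intervalIntegrable 0 ℓ)
      (fun x hx => hclaim x (Set.mem_Icc_of_Ioo hx)) hℓ
  have hzero : (∫ t in (0:ℝ)..ℓ, c t) = 0 := by
    have h := (innerSL ℝ m).intervalIntegral_comp_comm (hTint 0 ℓ)
    simp only [innerSL_apply_apply] at h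
    have : (∫ t in (0:ℝ)..ℓ, c t) = ⟪m, ∫ u in (0:ℝ)..ℓ, T u⟫ := h
    rw [this, hintT, inner_zero_right]
  linarith
end

section
/- Chord lemma: let γ : [a,b] → ℝ³ be a smooth regular arc with chord w = γ(b) − γ(a) ≠ 0. Let α be the angle between w and γ'(a) and β the angle between w and γ'(b). Then the total curvature of γ is at least α + β. -/
open InnerProductGeometry Real Set intervalIntegral MeasureTheory ContDiff

variable {V : Type*} [NormedAddCommGroup V] [InnerProductSpace ℝ V]

local notation "⟪" x ", " y "⟫" => @inner ℝ _ _ x y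

private lemma arccos_antitone {x y : ℝ} (h : x ≤ y) : Real.arccos y ≤ Real.arccos x := by
  rw [Real.arccos_eq_pi_div_two_sub_arcsin, Real.arccos_eq_pi_div_two_sub_arcsin]
  have := Real.monotone_arcsin h
  linarith

private lemma angle_unit (x y : V) (hx : ‖x‖ = 1) (hy : ‖y‖ = 1) :
    angle x y = Real.arccos ⟪x, y⟫ := by
  simp [InnerProductGeometry.angle, hx, hy]

private lemma angle_triangle_unit (x y z : V) (hx : ‖x‖ = 1) (hy : ‖y‖ = 1) (hz : ‖z‖ = 1) :
    angle x z ≤ angle x y + angle y z := by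
  by_cases hp : π ≤ angle x y + angle y z
  · exact (angle_le_pi x z).trans hp
  push_neg at hp
  have hA0 := angle_nonneg x y
  have hB0 := angle_nonneg y z
  have hAπ := angle_le_pi x y
  have hBπ := angle_le_pi y z
  have hcA : Real.cos (angle x y) = ⟪x, y⟫ := by
    rw [cos_angle, hx, hy]; norm_num
  have hcB : Real.cos (angle y z) = ⟪y, z⟫ := by
    rw [cos_angle, hy, hz]; norm_num
  have hsA : Real.sin (angle x y) = Real.sqrt (1 - ⟪x, y⟫ ^ 2) := by
    rw [Real.sin_eq_sqrt_one_sub_cos_sq hA0 hAπ, hcA]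
  have hsB : Real.sin (angle y z) = Real.sqrt (1 - ⟪y, z⟫ ^ 2) := by
    rw [Real.sin_eq_sqrt_one_sub_cos_sq hB0 hBπ, hcB]
  have hyy : ⟪y, y⟫ = (1 : ℝ) := by
    rw [real_inner_self_eq_norm_sq, hy]; norm_num
  have h1 : ⟪x - ⟪x, y⟫ • y, z - ⟪y, z⟫ • y⟫ = ⟪x, z⟫ - ⟪x, y⟫ * ⟪y, z⟫ := by
    simp only [inner_sub_left, inner_sub_right, real_inner_smul_left,
      real_inner_smul_right, hyy, mul_one]
    ring
  have h2 : ‖x - ⟪x, y⟫ • y‖ = Real.sqrt (1 - ⟪x, y⟫ ^ 2) := by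
    have h2' : ‖x - ⟪x, y⟫ • y‖ ^ 2 = 1 - ⟪x, y⟫ ^ 2 := by
      rw [norm_sub_sq_real, real_inner_smul_right, norm_smul, hx, hy]
      simp [Real.norm_eq_abs, sq_abs]
      ring
    rw [← h2', Real.sqrt_sq (norm_nonneg _)]
  have hzy : ⟪z, y⟫ = ⟪y, z⟫ := real_inner_comm y z
  have h3 : ‖z - ⟪y, z⟫ • y‖ = Real.sqrt (1 - ⟪y, z⟫ ^ 2) := by
    have h3' : ‖z - ⟪y, z⟫ • y‖ ^ 2 = 1 - ⟪y, z⟫ ^ 2 := by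
      rw [norm_sub_sq_real, real_inner_smul_right, norm_smul, hz, hy, hzy]
      simp [Real.norm_eq_abs, sq_abs]
      ring
    rw [← h3', Real.sqrt_sq (norm_nonneg _)]
  have hCS := abs_real_inner_le_norm (x - ⟪x, y⟫ • y) (z - ⟪y, z⟫ • y)
  rw [h1, h2, h3] at hCS
  have hxz : Real.cos (angle x y + angle y z) ≤ ⟪x, z⟫ := by
    rw [Real.cos_add, hcA, hcB, hsA, hsB]
    have := neg_abs_le (⟪x, z⟫ - ⟪x, y⟫ * ⟪y, z⟫)
    linarith [hCS]
  calc angle x z = Real.arccos ⟪x, z⟫ := angle_unit x z hx hz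
    _ ≤ Real.arccos (Real.cos (angle x y + angle y z)) := arccos_antitone hxz
    _ = angle x y + angle y z := Real.arccos_cos (by linarith) hp.le

private lemma angle_le_norm_add_cube {x y : V} (hx : ‖x‖ = 1) (hy : ‖y‖ = 1)
    (hc : ‖x - y‖ ≤ 1) : angle x y ≤ ‖x - y‖ + ‖x - y‖ ^ 3 := by
  set θ := angle x y with hθ
  set c := ‖x - y‖ with hcdef
  have hθ0 : 0 ≤ θ := angle_nonneg _ _
  have hθπ : θ ≤ π := angle_le_pi _ _
  have hc0 : 0 ≤ c := norm_nonneg _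
  have hcos : Real.cos θ = ⟪x, y⟫ := by rw [hθ, cos_angle, hx, hy]; norm_num
  have hc2 : c ^ 2 = 2 - 2 * Real.cos θ := by
    have := norm_sub_sq_real x y
    rw [hx, hy, ← hcdef, ← hcos] at this
    linarith
  have hπpos := Real.pi_pos
  have hsin : Real.sin (θ / 2) = c / 2 := by
    rw [Real.sin_half_eq_sqrt (by linarith) (by linarith)]
    rw [show (1 - Real.cos θ) / 2 = (c / 2) ^ 2 by nlinarith]
    exact Real.sqrt_sq (by positivity)
  have hu2 : θ / 2 ≤ π / 6 := by
    by_contra h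
    push_neg at h
    have h1 : Real.sin (π / 6) < Real.sin (θ / 2) :=
      Real.strictMonoOn_sin ⟨by linarith, by linarith⟩ ⟨by linarith, by linarith⟩ h
    rw [Real.sin_pi_div_six, hsin] at h1
    linarith
  have hπ4 : π ≤ 4 := Real.pi_le_four
  rcases eq_or_lt_of_le hθ0 with h0 | h0
  · rw [← h0]; positivity
  · have hu1 : θ / 2 ≤ 1 := by linarith
    have hs := Real.sin_gt_sub_cube (by linarith : 0 < θ / 2)
    rw [hsin] at hs
    have h23 : θ / 2 ≤ 2 / 3 := by linarith
    have husq : (θ / 2) ^ 2 ≤ 4 / 9 := by nlinarith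
    have h3 : (θ / 2) ^ 3 ≤ (4 / 9) * (θ / 2) := by
      nlinarith [mul_le_mul_of_nonneg_left husq (by linarith : (0:ℝ) ≤ θ / 2)]
    have h4 : θ / 2 ≤ (9 / 16) * c := by nlinarith
    have h5 : (θ / 2) ^ 3 ≤ ((9 / 16) * c) ^ 3 :=
      pow_le_pow_left₀ (by linarith) h4 3
    nlinarith [pow_nonneg hc0 3, h5, hs]

private lemma angle_chain (f : ℕ → V) (hf : ∀ i, ‖f i‖ = 1) :
    ∀ n, angle (f 0) (f n) ≤ ∑ i ∈ Finset.range n, angle (f i) (f (i + 1)) := by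
  intro n
  induction n with
  | zero =>
      have : f 0 ≠ 0 := by
        intro h; have := hf 0; rw [h] at this; simp at this
      simp [InnerProductGeometry.angle_self this]
  | succ n ih =>
      calc angle (f 0) (f (n + 1)) ≤ angle (f 0) (f n) + angle (f n) (f (n + 1)) :=
            angle_triangle_unit _ _ _ (hf 0) (hf n) (hf (n + 1))
        _ ≤ (∑ i ∈ Finset.range n, angle (f i) (f (i + 1))) + angle (f n) (f (n + 1)) :=
            add_le_add_left ih _
        _ = ∑ i ∈ Finset.range (n + 1), angle (f i) (f (i + 1)) :=
            (Finset.sum_range_succ _ _).symm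

private lemma key_lipschitz {V : Type*} [NormedAddCommGroup V] [InnerProductSpace ℝ V]
    [CompleteSpace V] {T : ℝ → V} (hT : ContDiff ℝ ∞ T) (hTu : ∀ t, ‖T t‖ = 1)
    {s t : ℝ} (hst : s ≤ t) :
    angle (T s) (T t) ≤ ∫ r in s..t, ‖deriv T r‖ := by
  have hTne : ∀ r, T r ≠ 0 := by
    intro r h; have := hTu r; rw [h] at this; simp at this
  have hTd : Differentiable ℝ T := hT.differentiable (by simp)
  have hT' : Continuous (deriv T) := (contDiff_infty_iff_deriv.mp hT).2.continuous
  have hInt : ∀ u v : ℝ, IntervalIntegrable (fun r => ‖deriv T r‖) volume u v :=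
    fun u v => (hT'.norm).intervalIntegrable u v
  have hchord : ∀ u v : ℝ, u ≤ v → ‖T v - T u‖ ≤ ∫ r in u..v, ‖deriv T r‖ := by
    intro u v huv
    have hftc := intervalIntegral.integral_deriv_eq_sub (a := u) (b := v)
      (fun x _ => hTd x) (hT'.intervalIntegrable u v)
    calc ‖T v - T u‖ = ‖∫ r in u..v, deriv T r‖ := by rw [hftc]
      _ ≤ ∫ r in u..v, ‖deriv T r‖ := intervalIntegral.norm_integral_le_integral_norm huv
  rcases eq_or_lt_of_le hst with rfl | hlt
  · simp [InnerProductGeometry.angle_self (hTne s)]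
  obtain ⟨M, hM⟩ := (isCompact_Icc (a := s) (b := t)).exists_bound_of_continuousOn
    (hT'.norm.continuousOn)
  have hM0 : 0 ≤ M := le_trans (norm_nonneg _) (hM s ⟨le_refl _, hst⟩)
  set I : ℝ := ∫ r in s..t, ‖deriv T r‖ with hI
  have hI0 : 0 ≤ I := intervalIntegral.integral_nonneg hst (fun _ _ => norm_nonneg _)
  refine le_of_forall_pos_le_add ?_
  intro ε hε
  obtain ⟨n, hn⟩ := exists_nat_gt (max (M * (t - s)) ((M * (t - s)) ^ 2 * I / ε))
  have hn1 : (1 : ℝ) ≤ n := by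
    have h1 := le_max_left (M * (t - s)) ((M * (t - s)) ^ 2 * I / ε)
    have : (0:ℝ) ≤ M * (t - s) := mul_nonneg hM0 (by linarith)
    have hn0 : (0:ℝ) < n := lt_of_le_of_lt (le_trans this h1) hn
    exact_mod_cast Nat.one_le_iff_ne_zero.mpr (by exact_mod_cast hn0.ne')
  have hnpos : (0:ℝ) < n := by linarith
  set δ : ℝ := M * (t - s) / n with hδ
  have hδ0 : 0 ≤ δ := div_nonneg (mul_nonneg hM0 (by linarith)) hnpos.le
  have hδ1 : δ ≤ 1 := by
    rw [hδ, div_le_one hnpos]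
    exact le_trans (le_max_left _ _) (by linarith [hn])
  set p : ℕ → ℝ := fun i => s + i * (t - s) / n with hp
  have hp0 : p 0 = s := by simp [hp]
  have hpn : p n = t := by
    have hn0 : (n:ℝ) ≠ 0 := hnpos.ne'
    simp only [hp]; rw [mul_div_cancel_left₀ _ hn0]
    ring
  have hpmono : ∀ i j : ℕ, i ≤ j → p i ≤ p j := by
    intro i j hij
    have : (i:ℝ) ≤ j := by exact_mod_cast hij
    have h1 : (0:ℝ) ≤ t - s := by linarith
    simp only [hp]
    gcongr
  have hrange : ∀ i : ℕ, i ≤ n → s ≤ p i ∧ p i ≤ t := by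
    intro i hi
    constructor
    · rw [← hp0]; exact hpmono 0 i (Nat.zero_le _)
    · rw [← hpn]; exact hpmono i n hi
  set ℓ : ℕ → ℝ := fun i => ∫ r in (p i)..(p (i+1)), ‖deriv T r‖ with hℓ
  have hℓ0 : ∀ i, 0 ≤ ℓ i := fun i =>
    intervalIntegral.integral_nonneg (hpmono i (i+1) (Nat.le_succ _)) (fun _ _ => norm_nonneg _)
  have hℓδ : ∀ i : ℕ, i < n → ℓ i ≤ δ := by
    intro i hi
    have hi1 : i + 1 ≤ n := hi
    have hri := hrange i hi.le
    have hri1 := hrange (i+1) hi1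
    have hsub : Set.uIoc (p i) (p (i+1)) ⊆ Set.Icc s t := by
      rw [Set.uIoc_of_le (hpmono i (i+1) (Nat.le_succ _))]
      intro x hx
      exact ⟨le_trans hri.1 hx.1.le, le_trans hx.2 hri1.2⟩
    have hb := intervalIntegral.norm_integral_le_of_norm_le_const
      (f := fun r => ‖deriv T r‖) (C := M) (a := p i) (b := p (i+1)) ?_
    · have hstep : |p (i+1) - p i| = (t - s) / n := by
        have : p (i+1) - p i = (t - s) / n := by
          simp only [hp]; push_cast; ring
        rw [this, abs_of_nonneg (div_nonneg (by linarith) hnpos.le)]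
      calc ℓ i ≤ |ℓ i| := le_abs_self _
        _ = ‖∫ r in (p i)..(p (i+1)), ‖deriv T r‖‖ := by rw [Real.norm_eq_abs]
        _ ≤ M * |p (i+1) - p i| := hb
        _ = δ := by rw [hstep, hδ]; ring
    · intro x hx
      exact hM x (hsub hx)
  have hsum : ∑ i ∈ Finset.range n, ℓ i = I := by
    rw [hI, ← hp0, ← hpn]
    exact intervalIntegral.sum_integral_adjacent_intervals (fun i _ => hInt _ _)
  have hchain := angle_chain (fun i => T (p i)) (fun i => hTu _) n
  have hterm : ∀ i ∈ Finset.range n, angle (T (p i)) (T (p (i+1))) ≤ ℓ i + δ ^ 2 * ℓ i := by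
    intro i hi
    rw [Finset.mem_range] at hi
    have hc : ‖T (p i) - T (p (i+1))‖ ≤ ℓ i := by
      rw [norm_sub_rev]
      exact hchord _ _ (hpmono i (i+1) (Nat.le_succ _))
    have hc1 : ‖T (p i) - T (p (i+1))‖ ≤ 1 := le_trans hc (le_trans (hℓδ i hi) hδ1)
    have hcδ : ‖T (p i) - T (p (i+1))‖ ≤ δ := le_trans hc (hℓδ i hi)
    have hB := angle_le_norm_add_cube (hTu (p i)) (hTu (p (i+1))) hc1
    have hcn : 0 ≤ ‖T (p i) - T (p (i+1))‖ := norm_nonneg _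
    nlinarith [hB, hc, hcδ, hcn, hℓ0 i, mul_le_mul hcδ hcδ hcn hδ0]
  calc angle (T s) (T t) = angle (T (p 0)) (T (p n)) := by rw [hp0, hpn]
    _ ≤ ∑ i ∈ Finset.range n, angle (T (p i)) (T (p (i+1))) := hchain
    _ ≤ ∑ i ∈ Finset.range n, (ℓ i + δ ^ 2 * ℓ i) := Finset.sum_le_sum hterm
    _ = (1 + δ ^ 2) * I := by rw [← hsum, Finset.mul_sum]; apply Finset.sum_congr rfl; intros; ring
    _ ≤ I + ε := by
      have hδε : δ ^ 2 * I ≤ ε := by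
        have h2 := le_max_right (M * (t - s)) ((M * (t - s)) ^ 2 * I / ε)
        have hlt2 : (M * (t - s)) ^ 2 * I / ε < n := lt_of_le_of_lt h2 hn
        have : (M * (t - s)) ^ 2 * I < ε * n := by
          rw [div_lt_iff₀ hε] at hlt2; linarith
        have hn2 : ε * n ≤ ε * n ^ 2 := by
          have : (n:ℝ) ≤ (n:ℝ)^2 := by nlinarith
          nlinarith [hε.le]
        have hδ2 : δ ^ 2 = (M * (t - s)) ^ 2 / n ^ 2 := by rw [hδ]; ring
        rw [hδ2, div_mul_eq_mul_div, div_le_iff₀ (by positivity)]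
        nlinarith
      linarith

set_option maxHeartbeats 1600000 in
/-- Chord lemma: if `γ : [a,b] → ℝ³` is a smooth (unit-speed) regular arc whose chord
`w = γ(b) - γ(a)` is nonzero, and `α`, `β` are the angles between `w` and the endpoint
velocities `γ'(a)`, `γ'(b)`, then the total curvature of `γ` is at least `α + β`. -/
theorem chord_lemma
    (a b : ℝ) (hab : a < b)
    (γ : ℝ → EuclideanSpace ℝ (Fin 3)) (hγ : ContDiff ℝ (⊤ : ℕ∞) γ)
    (hunit : ∀ t, ‖deriv γ t‖ = 1)
    (hchord : γ b - γ a ≠ 0) :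
    InnerProductGeometry.angle (γ b - γ a) (deriv γ a) +
      InnerProductGeometry.angle (γ b - γ a) (deriv γ b)
      ≤ ∫ t in a..b, ‖deriv (deriv γ) t‖ := by
  by_contra hcon
  push_neg at hcon
  set T : ℝ → EuclideanSpace ℝ (Fin 3) := deriv γ with hTdef
  have hgsm : ContDiff ℝ ∞ γ := hγ.of_le (by simp)
  have hγd : Differentiable ℝ γ := hgsm.differentiable (by simp)
  have hT : ContDiff ℝ ∞ T := (contDiff_infty_iff_deriv.mp hgsm).2
  have hTd : Differentiable ℝ T := hT.differentiable (by simp)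
  have hT' : Continuous (deriv T) := (contDiff_infty_iff_deriv.mp hT).2.continuous
  have hTcont : Continuous T := hTd.continuous
  have hTne : ∀ r, T r ≠ 0 := by
    intro r
    refine norm_ne_zero_iff.mp ?_
    rw [hunit r]; exact one_ne_zero
  have hInt : ∀ u v : ℝ, IntervalIntegrable (fun r => ‖deriv T r‖) volume u v :=
    fun u v => (hT'.norm).intervalIntegrable u v
  -- the chord and its unit vector
  set w : EuclideanSpace ℝ (Fin 3) := γ b - γ a with hwdef
  have hw : ‖w‖ ≠ 0 := norm_ne_zero_iff.mpr hchord
  have hwpos : 0 < ‖w‖ := (norm_nonneg w).lt_of_ne' hw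
  set u : EuclideanSpace ℝ (Fin 3) := ‖w‖⁻¹ • w with hudef
  have hu1 : ‖u‖ = 1 := by
    rw [hudef, norm_smul, norm_inv, norm_norm, inv_mul_cancel₀ hw]
  set v : EuclideanSpace ℝ (Fin 3) := -u with hvdef
  have hv1 : ‖v‖ = 1 := by rw [hvdef, norm_neg, hu1]
  -- angles
  have hangle_wu : ∀ x : EuclideanSpace ℝ (Fin 3), angle w x = angle u x := by
    intro x
    rw [hudef, angle_smul_left_of_pos _ _ (inv_pos.mpr hwpos)]
  set α : ℝ := angle u (T a) with hαdef
  set β : ℝ := angle u (T b) with hβdef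
  -- the arclength function of the tangent indicatrix
  set σ : ℝ → ℝ := fun x => ∫ r in a..x, ‖deriv T r‖ with hσdef
  have hσcont : Continuous σ := intervalIntegral.continuous_primitive hInt a
  have hσa : σ a = 0 := intervalIntegral.integral_same
  set L : ℝ := σ b with hLdef
  have hσsub : ∀ x y : ℝ, σ y - σ x = ∫ r in x..y, ‖deriv T r‖ := by
    intro x y
    rw [hσdef]
    exact intervalIntegral.integral_interval_sub_left (hInt a y) (hInt a x)
  have hKEY : ∀ x y : ℝ, x ≤ y → angle (T x) (T y) ≤ σ y - σ x := by
    intro x y hxy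
    rw [hσsub]
    exact key_lipschitz hT (fun r => hunit r) hxy
  have hσmono : ∀ x y : ℝ, x ≤ y → σ x ≤ σ y := by
    intro x y hxy
    have h0 : 0 ≤ σ y - σ x := by
      rw [hσsub]
      exact intervalIntegral.integral_nonneg hxy (fun _ _ => norm_nonneg _)
    linarith
  have hL0 : 0 ≤ L := by
    rw [hLdef, ← hσa]; exact hσmono a b hab.le
  -- hypothesis for contradiction in terms of α, β, L
  have hcon' : L < α + β := by
    rw [hangle_wu, hangle_wu] at hcon
    have hLint : L = ∫ t in a..b, ‖deriv T t‖ := by simp only [hLdef, hσdef]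
    rw [hLint]
    exact hcon
  -- |α - β| ≤ L
  have hTaTb : angle (T a) (T b) ≤ L := by
    have := hKEY a b hab.le
    rw [hσa] at this
    linarith
  have hβle : β ≤ α + L :=
    le_trans (angle_triangle_unit u (T a) (T b) hu1 (hunit a) (hunit b))
      (by linarith)
  have hαle : α ≤ β + L := by
    have h1 := angle_triangle_unit u (T b) (T a) hu1 (hunit b) (hunit a)
    rw [angle_comm (T b) (T a)] at h1
    linarith
  -- the split point
  set sp : ℝ := (L + α - β) / 2 with hspdef
  have hsp0 : 0 ≤ sp := by rw [hspdef]; linarith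
  have hspL : sp ≤ L := by rw [hspdef]; linarith
  obtain ⟨tp, htp, hσtp⟩ : ∃ tp ∈ Icc a b, σ tp = sp := by
    have hsub' : Icc (σ a) (σ b) ⊆ σ '' Icc a b :=
      intermediate_value_Icc hab.le hσcont.continuousOn
    have hmem : sp ∈ Icc (σ a) (σ b) := by
      rw [hσa]; exact ⟨hsp0, by rw [← hLdef]; exact hspL⟩
    obtain ⟨tp, h1, h2⟩ := hsub' hmem
    exact ⟨tp, h1, h2⟩
  set p : EuclideanSpace ℝ (Fin 3) := T tp with hpdef
  have hp1 : ‖p‖ = 1 := hunit tp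
  -- basic angle computations with v
  have hTav : angle (T a) v = π - α := by
    rw [hvdef, angle_neg_right, angle_comm, ← hαdef]
  have hTbv : angle (T b) v = π - β := by
    rw [hvdef, angle_neg_right, angle_comm, ← hβdef]
  have hπ := Real.pi_pos
  -- angle p v < π
  have hpa : angle p (T a) ≤ sp := by
    have := hKEY a tp htp.1
    rw [hσa, hσtp, angle_comm] at this
    linarith
  have hpv_lt : angle p v < π := by
    have h1 := angle_triangle_unit p (T a) v hp1 (hunit a) hv1
    rw [hTav] at h1
    have : angle p v ≤ sp + (π - α) := by linarith
    rw [hspdef] at this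
    linarith
  have hpvcos : (-1 : ℝ) < ⟪p, v⟫ := by
    have hcs : Real.cos (angle p v) = ⟪p, v⟫ := by
      rw [cos_angle, hp1, hv1]; norm_num
    have := Real.strictAntiOn_cos ⟨angle_nonneg p v, (angle_le_pi p v)⟩
      ⟨by linarith, le_refl π⟩ hpv_lt
    rw [Real.cos_pi, hcs] at this
    linarith
  -- the hemisphere pole
  have hpvnorm : 0 < ‖p + v‖ := by
    rcases (norm_nonneg (p + v)).lt_or_eq with h | h
    · exact h
    · exfalso
      have h2 : ‖p + v‖ ^ 2 = 0 := by rw [← h]; ring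
      rw [norm_add_sq_real, hp1, hv1] at h2
      nlinarith
  set m : EuclideanSpace ℝ (Fin 3) := ‖p + v‖⁻¹ • (p + v) with hmdef
  have hmv : ⟪m, v⟫ = ‖p + v‖⁻¹ * (⟪p, v⟫ + 1) := by
    rw [hmdef, real_inner_smul_left, inner_add_left, real_inner_self_eq_norm_sq, hv1]
    norm_num
  have hmp : ⟪m, p⟫ = ‖p + v‖⁻¹ * (1 + ⟪p, v⟫) := by
    rw [hmdef, real_inner_smul_left, inner_add_left, real_inner_self_eq_norm_sq, hp1]
    rw [real_inner_comm v p]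
    norm_num
  have hmv0 : 0 < ⟪m, v⟫ := by
    rw [hmv]
    exact mul_pos (inv_pos.mpr hpvnorm) (by linarith)
  have hmp0 : 0 < ⟪m, p⟫ := by
    rw [hmp]
    exact mul_pos (inv_pos.mpr hpvnorm) (by linarith)
  -- key nonvanishing claim
  have hne : ∀ t ∈ Icc a b, ⟪m, T t⟫ ≠ 0 := by
    intro t ht h0
    set x : EuclideanSpace ℝ (Fin 3) := T t with hxdef
    have hx1 : ‖x‖ = 1 := hunit t
    have hxv : ⟪x, v⟫ = -⟪x, p⟫ := by
      have hveq : ‖p + v‖ • m - p = v := by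
        rw [hmdef, smul_inv_smul₀ hpvnorm.ne']
        abel
      rw [← hveq, inner_sub_right, real_inner_smul_right]
      have hxm : ⟪x, m⟫ = 0 := by rw [real_inner_comm]; exact h0
      rw [hxm]
      ring
    have hsum : angle x p + angle x v = π := by
      have hav : angle x v = Real.arccos ⟪x, v⟫ := angle_unit x v hx1 hv1
      have hap : angle x p = Real.arccos ⟪x, p⟫ := angle_unit x p hx1 hp1
      rw [hav, hxv, Real.arccos_neg, hap]
      ring
    -- distance bounds
    have hxva : angle x v ≤ σ t + (π - α) := by
      have h1 := angle_triangle_unit x (T a) v hx1 (hunit a) hv1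
      have h2 : angle x (T a) ≤ σ t := by
        have := hKEY a t ht.1
        rw [hσa, angle_comm] at this
        linarith
      rw [hTav] at h1
      linarith
    have hxvb : angle x v ≤ (L - σ t) + (π - β) := by
      have h1 := angle_triangle_unit x (T b) v hx1 (hunit b) hv1
      have h2 : angle x (T b) ≤ L - σ t := by
        have := hKEY t b ht.2
        rw [← hLdef] at this
        linarith
      rw [hTbv] at h1
      linarith
    rcases le_total t tp with h | h
    · have b1 : angle x p ≤ sp - σ t := by
        have := hKEY t tp h
        rw [hσtp] at this
        exact this
      have hsp' : sp = (L + α - β) / 2 := hspdef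
      linarith
    · have b1 : angle x p ≤ σ t - sp := by
        have := hKEY tp t h
        rw [hσtp, angle_comm] at this
        exact this
      have hsp' : sp = (L + α - β) / 2 := hspdef
      linarith
  -- positivity on [a, b]
  have hposF : ∀ t ∈ Icc a b, 0 < ⟪m, T t⟫ := by
    intro t ht
    rcases lt_or_ge 0 ⟪m, T t⟫ with h | h
    · exact h
    exfalso
    have hlt : ⟪m, T t⟫ < 0 := lt_of_le_of_ne h (hne t ht)
    have hFc : ContinuousOn (fun r => ⟪m, T r⟫) (uIcc t tp) :=
      (continuous_const.inner hTcont).continuousOn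
    have h0mem : (0:ℝ) ∈ uIcc ⟪m, T t⟫ ⟪m, T tp⟫ := by
      rw [Set.mem_uIcc]
      left
      exact ⟨hlt.le, by rw [← hpdef]; exact hmp0.le⟩
    obtain ⟨r, hr, hFr⟩ := intermediate_value_uIcc hFc h0mem
    have hrab : r ∈ Icc a b := by
      have hsub2 : uIcc t tp ⊆ Icc a b := by
        rw [Set.uIcc_eq_union]
        rintro y (hy | hy)
        · exact ⟨le_trans ht.1 hy.1, le_trans hy.2 htp.2⟩
        · exact ⟨le_trans htp.1 hy.1, le_trans hy.2 ht.2⟩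
      exact hsub2 hr
    exact hne r hrab (by simpa using hFr)
  -- conclude
  have hint2 : IntervalIntegrable (fun t => ⟪m, T t⟫) volume a b :=
    Continuous.intervalIntegrable (μ := volume) (continuous_const.inner hTcont) a b
  have hIpos : 0 < ∫ t in a..b, ⟪m, T t⟫ :=
    intervalIntegral.intervalIntegral_pos_of_pos_on hint2
      (fun x hx => hposF x ⟨hx.1.le, hx.2.le⟩) hab
  have hFTC : ∫ t in a..b, T t = w := by
    rw [hwdef, hTdef]
    exact intervalIntegral.integral_deriv_eq_sub (fun x _ => hγd x)
      (hTcont.intervalIntegrable a b)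
  have hcomm : ∫ t in a..b, ⟪m, T t⟫ = ⟪m, w⟫ := by
    have hint3 : IntervalIntegrable T volume a b := hTcont.intervalIntegrable a b
    have h1 := (innerSL ℝ m).intervalIntegral_comp_comm hint3 (a := a) (b := b)
    rw [hFTC] at h1
    simpa using h1
  have hneg : ⟪m, w⟫ < 0 := by
    have hweq : w = ‖w‖ • u := by rw [hudef, smul_inv_smul₀ hw]
    rw [hweq, real_inner_smul_right]
    have h2 : ⟪m, u⟫ = -⟪m, v⟫ := by rw [hvdef, inner_neg_right]; ring
    rw [h2]
    nlinarith [hmv0, hwpos]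
  rw [hcomm] at hIpos
  linarith
end

section
/- For a closed polygonal line p₀p₁…p_n = p₀ in ℝ³ (with all vertices distinct from their neighbors and no vertex angle equal to π), the sum of the exterior angles (π − ∠(p_{i−1}, p_i, p_{i+1})) over all vertices is at least 2π. -/
/-!
Write `vᵢ = pᵢ₊₁ - pᵢ` for the edge vectors: the exterior angle at `pᵢ₊₁` is the angle between
`vᵢ` and `vᵢ₊₁`, and the edge vectors of a closed polygon sum to zero. Merging two consecutive
edges `a, b` into `a + b` (deleting the vertex between them) does not increase the total turning,
by the triangle inequality for angles and `∠(a, b) = ∠(a, a + b) + ∠(a + b, b)`; if `a + b = 0`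
both edges can be dropped. This reduces every closed polygon to a doubly traversed segment,
whose total turning is exactly `2π`.
-/

open Finset Real

namespace InnerProductGeometry

variable {V : Type*} [NormedAddCommGroup V] [InnerProductSpace ℝ V]

theorem angle_add_add_angle_add_le (x a y : V) {b : V} (hb : b ≠ 0) :
    angle x (a + b) + angle (a + b) y ≤ angle x a + angle a b + angle b y := by
  have hsplit : angle a (a + b) + angle (a + b) b = angle a b := by
    rw [angle_eq_angle_add_add_angle_add a hb, angle_comm b]
  linarith [angle_le_angle_add_angle x a (a + b), angle_le_angle_add_angle (a + b) b y]

theorem angle_le_angle_add_angle_add_angle_neg (x y : V) {a : V} (ha : a ≠ 0) :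
    angle x y ≤ angle x a + angle a (-a) + angle (-a) y := by
  rw [angle_self_neg_of_nonzero ha, angle_neg_left]
  linarith [angle_le_angle_add_angle x a y, angle_le_pi a y]

theorem two_pi_le_sum_angle_of_sum_eq_zero (n : ℕ) (v : ℕ → V) (hv : ∀ i < n + 2, v i ≠ 0)
    (hsum : ∑ i ∈ range (n + 2), v i = 0) :
    2 * π ≤ ∑ i ∈ range (n + 1), angle (v i) (v (i + 1)) + angle (v (n + 1)) (v 0) := by
  induction n using Nat.strong_induction_on generalizing v with
  | _ n ih =>
  match n with
  | 0 =>
    have h1 : v 1 = -v 0 := eq_neg_of_add_eq_zero_right (by simpa [sum_range_succ] using hsum)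
    rw [sum_range_one, h1, angle_self_neg_of_nonzero (hv 0 (by omega)),
      angle_neg_self_of_nonzero (hv 0 (by omega))]
    linarith
  | k + 1 =>
    rw [sum_range_succ, sum_range_succ, add_assoc] at hsum
    rw [sum_range_succ, sum_range_succ]
    by_cases hw : v (k + 1) + v (k + 2) = 0
    · rw [hw, add_zero] at hsum
      rcases k with _ | j
      · exact absurd (by simpa using hsum) (hv 0 (by omega))
      have hshorter := ih j (by omega) v (fun i hi => hv i (by omega)) hsum
      have hdrop := angle_le_angle_add_angle_add_angle_neg (v (j + 1)) (v 0) (hv (j + 1 + 1) (by omega))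
      rw [eq_neg_of_add_eq_zero_right hw]
      linarith
    · set u := Function.update v (k + 1) (v (k + 1) + v (k + 2))
      have hu : ∀ i < k + 1, u i = v i := fun i hi => Function.update_of_ne (by omega) _ _
      have hu_top : u (k + 1) = v (k + 1) + v (k + 2) := Function.update_self ..
      have hsum_u : ∑ i ∈ range (k + 1), angle (u i) (u (i + 1)) =
          ∑ i ∈ range k, angle (v i) (v (i + 1)) + angle (v k) (v (k + 1) + v (k + 2)) := by
        rw [sum_range_succ, hu k (by omega), hu_top]
        congr 1
        exact sum_congr rfl fun i hi => by
          rw [hu i (by grind), hu (i + 1) (by grind)]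
      have hmerged := ih k (by omega) u
        (fun i hi => by
          rcases lt_or_eq_of_le (Nat.lt_succ_iff.mp hi) with hi | rfl
          · rw [hu i hi]; exact hv i (by omega)
          · rwa [hu_top])
        (by rw [sum_range_succ, sum_congr rfl fun i hi => hu i (mem_range.mp hi),
              hu_top]; exact hsum)
      rw [hsum_u, hu_top, hu 0 (by omega)] at hmerged
      have hmerge := angle_add_add_angle_add_le (v k) (v (k + 1)) (v 0) (hv (k + 2) (by omega))
      linarith

end InnerProductGeometry

namespace EuclideanGeometry

theorem pi_sub_angle_eq_angle_vsub {V P : Type*} [NormedAddCommGroup V]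
    [InnerProductSpace ℝ V] [MetricSpace P] [NormedAddTorsor V P] (a b c : P) :
    π - ∠ a b c = InnerProductGeometry.angle (b -ᵥ a) (c -ᵥ b) := by
  rw [angle, ← neg_vsub_eq_vsub_rev a b, InnerProductGeometry.angle_neg_left]

end EuclideanGeometry

open EuclideanGeometry

theorem closed_polygon_total_curvature_ge_two_pi_general
    (n : ℕ) (hn : 1 ≤ n)
    (p : ℕ → EuclideanSpace ℝ (Fin 3))
    (hper : ∀ i, p (i + n) = p i)
    (hne : ∀ i, p (i + 1) ≠ p i) :
    2 * Real.pi ≤ ∑ i ∈ Finset.range n,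
      (Real.pi - EuclideanGeometry.angle (p i) (p (i + 1)) (p (i + 2))) := by
  obtain ⟨m, rfl⟩ : ∃ m, n = m + 2 := by
    have : n ≠ 1 := by rintro rfl; exact hne 0 (by simpa using hper 0)
    exact ⟨n - 2, by omega⟩
  let v : ℕ → EuclideanSpace ℝ (Fin 3) := fun i => p (i + 1) - p i
  have hclosed : ∑ i ∈ range (m + 2), v i = 0 := by
    rw [sum_range_sub, ← zero_add (m + 2), hper, sub_self]
  have hv_period : v (m + 2) = v 0 := by
    change p (m + 2 + 1) - p (m + 2) = p (0 + 1) - p 0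
    rw [← hper 1, ← hper 0, zero_add, add_comm 1]
  calc 2 * π ≤ ∑ i ∈ range (m + 1), InnerProductGeometry.angle (v i) (v (i + 1)) +
        InnerProductGeometry.angle (v (m + 1)) (v 0) :=
        InnerProductGeometry.two_pi_le_sum_angle_of_sum_eq_zero m v
          (fun i _ => sub_ne_zero.mpr (hne i)) hclosed
    _ = ∑ i ∈ range (m + 2), InnerProductGeometry.angle (v i) (v (i + 1)) := by
        rw [sum_range_succ _ (m + 1), hv_period]
    _ = _ := sum_congr rfl fun i _ =>
        (pi_sub_angle_eq_angle_vsub (p i) (p (i + 1)) (p (i + 2))).symm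

/-- Polygonal Fenchel theorem: for a closed polygonal line `p₀ p₁ … pₙ = p₀` in `ℝ³`
(consecutive vertices distinct and no vertex turning exactly backwards), the sum of the
exterior angles `π - ∠(pᵢ₋₁, pᵢ, pᵢ₊₁)` over all vertices is at least `2π`. -/
theorem closed_polygon_total_curvature_ge_two_pi
    (n : ℕ) (hn : 1 ≤ n)
    (p : ℕ → EuclideanSpace ℝ (Fin 3))
    (hper : ∀ i, p (i + n) = p i)
    (hne : ∀ i, p (i + 1) ≠ p i)
    (hnoCusp : ∀ i,
      InnerProductGeometry.angle (p (i + 1) - p i) (p (i + 2) - p (i + 1)) ≠ Real.pi) :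
    2 * Real.pi ≤ ∑ i ∈ Finset.range n,
      (Real.pi - EuclideanGeometry.angle (p i) (p (i + 1)) (p (i + 2))) :=
  closed_polygon_total_curvature_ge_two_pi_general n hn p hper hne
end

section
/- Let γ : [a,b] → ℝ³ be a smooth unit-speed curve with total curvature at most 2θ for some 0 < θ ≤ π/2. Then |γ(b) − γ(a)| ≥ cos θ · (b − a), with strict inequality when b > a. -/
open Real MeasureTheory intervalIntegral Set
open scoped RealInnerProductSpace

/-- Core lemma: if `u` is a C¹ curve of unit vectors and the length of `u` on `[c,d]`
is at most `θ ≤ π/2`, then `⟪u c, u d⟫ ≥ cos θ`. -/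
lemma inner_ge_cos_of_sphere_path {E : Type*} [NormedAddCommGroup E] [InnerProductSpace ℝ E]
    (u : ℝ → E) (hu : Differentiable ℝ u) (hu' : Continuous (deriv u))
    (hnorm : ∀ s, ‖u s‖ = 1) (c d θ : ℝ) (hcd : c ≤ d) (hθ0 : 0 ≤ θ) (hθπ : θ ≤ π / 2)
    (hint : (∫ s in c..d, ‖deriv u s‖) ≤ θ) :
    Real.cos θ ≤ ⟪u c, u d⟫ := by
  set κ : ℝ → ℝ := fun s => ‖deriv u s‖ with hκ_def
  have hκcont : Continuous κ := hu'.norm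
  have hκ0 : ∀ s, 0 ≤ κ s := fun s => norm_nonneg _
  set K : ℝ → ℝ := fun s => ∫ t in c..s, κ t with hK_def
  set p : ℝ → ℝ := fun s => ⟪u c, u s⟫ with hp_def
  set φ : ℝ → ℝ := fun s => Real.arccos (p s) with hφ_def
  have hpcont : Continuous p := continuous_const.inner hu.continuous
  have hφcont : Continuous φ := Real.continuous_arccos.comp hpcont
  have hp_le : ∀ s, |p s| ≤ 1 := by
    intro s
    have := abs_real_inner_le_norm (u c) (u s)
    simpa [hnorm c, hnorm s] using this
  -- derivative of K
  have hK' : ∀ s, HasDerivAt K (κ s) s := by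
    intro s
    exact intervalIntegral.integral_hasDerivAt_right
      (hκcont.intervalIntegrable _ _)
      (hκcont.stronglyMeasurable.stronglyMeasurableAtFilter)
      hκcont.continuousAt
  have hKcont : Continuous K := by
    rw [continuous_iff_continuousAt]; exact fun s => (hK' s).continuousAt
  -- orthogonality of u and deriv u
  have horth : ∀ s, ⟪u s, deriv u s⟫ = 0 := by
    intro s
    have h1 : HasDerivAt (fun t => ⟪u t, u t⟫)
        (⟪u s, deriv u s⟫ + ⟪deriv u s, u s⟫) s :=
      ((hu s).hasDerivAt).inner ℝ ((hu s).hasDerivAt)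
    have h2 : (fun t : ℝ => ⟪u t, u t⟫) = fun _ => (1 : ℝ) := by
      funext t
      rw [real_inner_self_eq_norm_mul_norm, hnorm t, one_mul]
    rw [h2] at h1
    have h3 := (hasDerivAt_const s (1 : ℝ)).unique h1
    have h4 : ⟪u s, deriv u s⟫ = ⟪deriv u s, u s⟫ := real_inner_comm _ _
    linarith
  -- derivative of p
  have hp' : ∀ s, HasDerivAt p (⟪u c, deriv u s⟫) s := by
    intro s
    have h1 := (hasDerivAt_const s (u c)).inner ℝ ((hu s).hasDerivAt)
    simpa using h1
  -- the key derivative bound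
  have hbound : ∀ s, |⟪u c, deriv u s⟫| ≤ κ s * Real.sqrt (1 - p s ^ 2) := by
    intro s
    have hgeom : ⟪u c, deriv u s⟫ = ⟪u c - p s • u s, deriv u s⟫ := by
      rw [inner_sub_left, real_inner_smul_left, horth s, mul_zero, sub_zero]
    have hcs : |⟪u c - p s • u s, deriv u s⟫| ≤ ‖u c - p s • u s‖ * ‖deriv u s‖ :=
      abs_real_inner_le_norm _ _
    have hnormw : ‖u c - p s • u s‖ = Real.sqrt (1 - p s ^ 2) := by
      have h1 : ‖u c - p s • u s‖ ^ 2 = 1 - p s ^ 2 := by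
        rw [norm_sub_sq_real, real_inner_smul_right, norm_smul]
        simp only [hnorm c, hnorm s, Real.norm_eq_abs]
        have : ⟪u c, u s⟫ = p s := rfl
        rw [this]
        rw [mul_pow, sq_abs]
        ring
      rw [← h1, Real.sqrt_sq (norm_nonneg _)]
    rw [hgeom]
    calc |⟪u c - p s • u s, deriv u s⟫| ≤ ‖u c - p s • u s‖ * ‖deriv u s‖ := hcs
      _ = κ s * Real.sqrt (1 - p s ^ 2) := by rw [hnormw]; ring
  -- K is bounded by θ on [c, d] and nonneg
  have hKmono : ∀ s t, s ≤ t → K s ≤ K t := by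
    intro s t hst
    have h1 : K t - K s = ∫ r in s..t, κ r := by
      rw [hK_def]
      exact intervalIntegral.integral_interval_sub_left
        (hκcont.intervalIntegrable _ _) (hκcont.intervalIntegrable _ _)
    have h2 : 0 ≤ ∫ r in s..t, κ r :=
      intervalIntegral.integral_nonneg hst (fun r _ => hκ0 r)
    linarith
  have hK0 : K c = 0 := by simp [hK_def]
  have hKnonneg : ∀ s, c ≤ s → 0 ≤ K s := fun s hs => hK0 ▸ hKmono c s hs
  have hKθ : ∀ s, s ≤ d → K s ≤ θ := fun s hs => le_trans (hKmono s d hs) hint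
  have hφc : φ c = 0 := by
    have : p c = 1 := by
      rw [hp_def]
      simp only
      rw [real_inner_self_eq_norm_mul_norm, hnorm c, one_mul]
    rw [hφ_def]; simp only; rw [this, Real.arccos_one]
  -- the key claim via first-crossing argument
  have key : ∀ ε, 0 < ε → ε < π - θ → ∀ s ∈ Set.Icc c d, φ s < K s + ε := by
    intro ε hε0 hεπ
    by_contra hcon
    push_neg at hcon
    obtain ⟨sbad, hsbad, hges⟩ := hcon
    set A : Set ℝ := {s | s ∈ Set.Icc c d ∧ K s + ε ≤ φ s} with hA_def
    have hA_ne : A.Nonempty := ⟨sbad, hsbad, hges⟩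
    have hA_closed : IsClosed A := by
      have : A = Set.Icc c d ∩ {s | K s + ε ≤ φ s} := rfl
      rw [this]
      exact isClosed_Icc.inter (isClosed_le (by fun_prop) hφcont)
    have hA_bdd : BddBelow A := ⟨c, fun x hx => hx.1.1⟩
    set s₁ := sInf A with hs₁_def
    have hs₁A : s₁ ∈ A := hA_closed.csInf_mem hA_ne hA_bdd
    have hs₁Icc : s₁ ∈ Set.Icc c d := hs₁A.1
    have hs₁ge : K s₁ + ε ≤ φ s₁ := hs₁A.2
    have hcs₁ : c < s₁ := by
      rcases lt_or_eq_of_le hs₁Icc.1 with h | h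
      · exact h
      · exfalso
        rw [← h] at hs₁ge
        rw [hφc, hK0] at hs₁ge
        linarith
    have hbefore : ∀ s, c ≤ s → s < s₁ → φ s < K s + ε := by
      intro s hcs hss₁
      by_contra hcon2
      push_neg at hcon2
      have hsA : s ∈ A := ⟨⟨hcs, le_trans hss₁.le hs₁Icc.2⟩, hcon2⟩
      exact absurd (csInf_le hA_bdd hsA) (not_le.mpr hss₁)
    -- equality at s₁ by continuity from the left
    have heq : φ s₁ ≤ K s₁ + ε := by
      have hne : (nhdsWithin s₁ (Set.Iio s₁)).NeBot := nhdsLT_neBot _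
      have htend : Filter.Tendsto (fun s => φ s - K s) (nhdsWithin s₁ (Set.Iio s₁))
          (nhds (φ s₁ - K s₁)) :=
        ((hφcont.sub hKcont).tendsto s₁).mono_left nhdsWithin_le_nhds
      have hev : ∀ᶠ s in nhdsWithin s₁ (Set.Iio s₁), (fun s => φ s - K s) s ≤ ε := by
        have hmem : Set.Ioo c s₁ ∈ nhdsWithin s₁ (Set.Iio s₁) :=
          Ioo_mem_nhdsLT_of_mem ⟨hcs₁, le_refl _⟩
        filter_upwards [hmem] with s hs
        have := hbefore s hs.1.le hs.2
        linarith
      have := le_of_tendsto htend hev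
      linarith
    have hφs₁ : φ s₁ = K s₁ + ε := le_antisymm heq hs₁ge
    -- p s₁ ∈ (-1, 1)
    have hps₁_lt : p s₁ < 1 := by
      by_contra hcon2
      push_neg at hcon2
      have : φ s₁ = 0 := by
        rw [hφ_def]; simp only; exact Real.arccos_eq_zero.mpr hcon2
      rw [this] at hφs₁
      have := hKnonneg s₁ hs₁Icc.1
      linarith
    have hps₁_gt : -1 < p s₁ := by
      by_contra hcon2
      push_neg at hcon2
      have hpi : φ s₁ = π := by
        rw [hφ_def]; simp only; exact Real.arccos_eq_pi.mpr hcon2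
      have hKs₁ : K s₁ ≤ θ := hKθ s₁ hs₁Icc.2
      rw [hpi] at hφs₁
      linarith
    -- find a small left interval where p stays in (-1, 1)
    have hUopen : IsOpen {s : ℝ | -1 < p s ∧ p s < 1} :=
      (isOpen_lt continuous_const hpcont).inter (isOpen_lt hpcont continuous_const)
    obtain ⟨δ, hδ0, hδsub⟩ := Metric.isOpen_iff.mp hUopen s₁ ⟨hps₁_gt, hps₁_lt⟩
    set t := max c (s₁ - δ / 2) with ht_def
    have hts₁ : t < s₁ := by
      apply max_lt hcs₁
      linarith
    have hct : c ≤ t := le_max_left _ _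
    have hsub : Set.Icc t s₁ ⊆ {s : ℝ | -1 < p s ∧ p s < 1} := by
      intro x hx
      apply hδsub
      rw [Metric.mem_ball, Real.dist_eq, abs_sub_lt_iff]
      constructor
      · linarith [hx.2]
      · have : s₁ - δ / 2 ≤ t := le_max_right _ _
        have := hx.1
        linarith
    -- ψ = K - φ is monotone on [t, s₁]
    set ψ : ℝ → ℝ := fun s => K s - φ s with hψ_def
    have hder : ∀ x ∈ Set.Icc t s₁,
        HasDerivAt ψ (κ x - -(1 / Real.sqrt (1 - p x ^ 2)) * ⟪u c, deriv u x⟫) x := by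
      intro x hx
      obtain ⟨hx1, hx2⟩ := hsub hx
      have hφ' : HasDerivAt φ (-(1 / Real.sqrt (1 - p x ^ 2)) * ⟪u c, deriv u x⟫) x := by
        have harc := Real.hasDerivAt_arccos (ne_of_gt hx1) (ne_of_lt hx2)
        exact harc.comp x (hp' x)
      exact (hK' x).sub hφ'
    have hder_nonneg : ∀ x ∈ Set.Icc t s₁,
        0 ≤ κ x - -(1 / Real.sqrt (1 - p x ^ 2)) * ⟪u c, deriv u x⟫ := by
      intro x hx
      obtain ⟨hx1, hx2⟩ := hsub hx
      have hsq : 0 < 1 - p x ^ 2 := by nlinarith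
      have hsqrt : 0 < Real.sqrt (1 - p x ^ 2) := Real.sqrt_pos.mpr hsq
      have hb := hbound x
      have h1 : |(1 / Real.sqrt (1 - p x ^ 2)) * ⟪u c, deriv u x⟫| ≤ κ x := by
        rw [abs_mul, abs_of_pos (by positivity : (0:ℝ) < 1 / Real.sqrt (1 - p x ^ 2))]
        rw [div_mul_eq_mul_div, one_mul, div_le_iff₀ hsqrt]
        exact hb
      have := neg_abs_le ((1 / Real.sqrt (1 - p x ^ 2)) * ⟪u c, deriv u x⟫)
      have h2 := abs_le.mp h1
      linarith [h2.1, h2.2]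
    have hmono : MonotoneOn ψ (Set.Icc t s₁) := by
      apply monotoneOn_of_deriv_nonneg (convex_Icc t s₁)
      · exact fun x hx => ((hder x hx).continuousAt.continuousWithinAt)
      · intro x hx
        rw [interior_Icc] at hx
        exact ((hder x (Set.mem_Icc_of_Ioo hx)).differentiableAt.differentiableWithinAt)
      · intro x hx
        rw [interior_Icc] at hx
        rw [(hder x (Set.mem_Icc_of_Ioo hx)).deriv]
        exact hder_nonneg x (Set.mem_Icc_of_Ioo hx)
    have hmem_t : t ∈ Set.Icc t s₁ := ⟨le_refl _, hts₁.le⟩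
    have hmem_s₁ : s₁ ∈ Set.Icc t s₁ := ⟨hts₁.le, le_refl _⟩
    have hψle := hmono hmem_t hmem_s₁ hts₁.le
    have hψt : ψ t > -ε := by
      have := hbefore t hct hts₁
      rw [hψ_def]; simp only; linarith
    have hψs₁ : ψ s₁ = -ε := by
      rw [hψ_def]; simp only; rw [hφs₁]; ring
    rw [hψs₁] at hψle
    linarith
  -- conclude: φ d ≤ K d
  have hφd : φ d ≤ K d := by
    by_contra hcon
    push_neg at hcon
    set ε := min ((φ d - K d) / 2) ((π - θ) / 2) with hε_def
    have hπθ : 0 < π - θ := by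
      have := Real.pi_pos
      linarith
    have hε0 : 0 < ε := lt_min (by linarith) (by linarith)
    have hεπ : ε < π - θ := lt_of_le_of_lt (min_le_right _ _) (by linarith)
    have := key ε hε0 hεπ d ⟨hcd, le_refl _⟩
    have hεle : ε ≤ (φ d - K d) / 2 := min_le_left _ _
    linarith
  -- finish
  have hKd : K d ≤ θ := hint
  have hφd_nonneg : 0 ≤ φ d := Real.arccos_nonneg _
  have hφdθ : φ d ≤ θ := le_trans hφd hKd
  have hcosφ : Real.cos (φ d) = p d := by
    rw [hφ_def]
    simp only
    exact Real.cos_arccos (neg_le_of_abs_le (hp_le d)) (le_of_abs_le (hp_le d))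
  have hθπ' : θ ≤ π := le_trans hθπ (by linarith [Real.pi_pos])
  have := Real.cos_le_cos_of_nonneg_of_le_pi hφd_nonneg hθπ' hφdθ
  rw [hcosφ] at this
  exact this

/-- If a smooth unit-speed curve `γ : [a,b] → ℝ³` has total curvature at most `2θ` with
`0 < θ ≤ π/2`, then `|γ(b) - γ(a)| ≥ cos θ · (b - a)`, with strict inequality when
`b > a`. -/
theorem dist_ge_cos_of_small_total_curvature
    (a b : ℝ) (hab : a ≤ b) (θ : ℝ) (hθ₀ : 0 < θ) (hθ : θ ≤ Real.pi / 2)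
    (γ : ℝ → EuclideanSpace ℝ (Fin 3)) (hγ : ContDiff ℝ (⊤ : ℕ∞) γ)
    (hunit : ∀ s, ‖deriv γ s‖ = 1)
    (htc : (∫ s in a..b, ‖deriv (deriv γ) s‖) ≤ 2 * θ) :
    Real.cos θ * (b - a) ≤ dist (γ a) (γ b) ∧
      (a < b → Real.cos θ * (b - a) < dist (γ a) (γ b)) := by
  have hgsm : ContDiff ℝ (⊤ : ℕ∞) γ := hγ.of_le (by simp)
  have hγdiff : Differentiable ℝ γ := (contDiff_infty_iff_deriv.mp hgsm).1
  have hu : Differentiable ℝ (deriv γ) :=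
    (contDiff_infty_iff_deriv.mp (contDiff_infty_iff_deriv.mp hgsm).2).1
  have hu' : Continuous (deriv (deriv γ)) :=
    (contDiff_infty_iff_deriv.mp (contDiff_infty_iff_deriv.mp hgsm).2).2.continuous
  set u : ℝ → EuclideanSpace ℝ (Fin 3) := deriv γ with hu_def
  set κ : ℝ → ℝ := fun s => ‖deriv u s‖ with hκ_def
  have hκcont : Continuous κ := hu'.norm
  have hκ0 : ∀ s, 0 ≤ κ s := fun s => norm_nonneg _
  set G : ℝ → ℝ := fun s => ∫ t in a..s, κ t with hG_def
  have hG' : ∀ s, HasDerivAt G (κ s) s := by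
    intro s
    exact intervalIntegral.integral_hasDerivAt_right
      (hκcont.intervalIntegrable _ _)
      (hκcont.stronglyMeasurable.stronglyMeasurableAtFilter)
      hκcont.continuousAt
  have hGcont : Continuous G := by
    rw [continuous_iff_continuousAt]; exact fun s => (hG' s).continuousAt
  have hGsub : ∀ s t : ℝ, G t - G s = ∫ r in s..t, κ r := by
    intro s t
    exact intervalIntegral.integral_interval_sub_left
      (hκcont.intervalIntegrable _ _) (hκcont.intervalIntegrable _ _)
  have hGmono : ∀ s t, s ≤ t → G s ≤ G t := by
    intro s t hst
    have h2 : 0 ≤ ∫ r in s..t, κ r :=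
      intervalIntegral.integral_nonneg hst (fun r _ => hκ0 r)
    have := hGsub s t
    linarith
  have hGa : G a = 0 := by simp [hG_def]
  set tc := G b with htc_def
  have htc0 : 0 ≤ tc := hGa ▸ hGmono a b hab
  have htcθ : tc ≤ 2 * θ := htc
  -- find the midpoint s₀ via IVT
  have hIVT : Set.Icc (G a) (G b) ⊆ G '' Set.Icc a b :=
    intermediate_value_Icc hab hGcont.continuousOn
  have hmem : tc / 2 ∈ Set.Icc (G a) (G b) := ⟨by rw [hGa]; positivity, by linarith⟩
  obtain ⟨s₀, hs₀Icc, hs₀⟩ := hIVT hmem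
  -- p s = ⟪u s₀, u s⟫ ≥ cos θ for all s ∈ [a, b]
  have hp_ge : ∀ s ∈ Set.Icc a b, Real.cos θ ≤ ⟪u s₀, u s⟫ := by
    intro s hs
    rcases le_total s₀ s with h | h
    · apply inner_ge_cos_of_sphere_path u hu hu' hunit s₀ s θ h (le_of_lt hθ₀) hθ
      have h1 : (∫ r in s₀..s, κ r) = G s - G s₀ := (hGsub s₀ s).symm
      have h2 : G s ≤ tc := hGmono s b hs.2
      rw [h1, hs₀]
      linarith
    · have h3 := inner_ge_cos_of_sphere_path u hu hu' hunit s s₀ θ h (le_of_lt hθ₀) hθ ?_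
      · rw [real_inner_comm] at h3
        exact h3
      · have h1 : (∫ r in s..s₀, κ r) = G s₀ - G s := (hGsub s s₀).symm
        have h2 : 0 ≤ G s := hGa ▸ hGmono a s hs.1
        rw [h1, hs₀]
        linarith
  set v : EuclideanSpace ℝ (Fin 3) := u s₀ with hv_def
  set f : ℝ → ℝ := fun s => ⟪u s, v⟫ with hf_def
  have hfcont : Continuous f := hu.continuous.inner continuous_const
  have hf_ge : ∀ s ∈ Set.Icc a b, Real.cos θ ≤ f s := by
    intro s hs
    have := hp_ge s hs
    rw [hf_def]
    simp only
    rw [real_inner_comm]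
    exact this
  -- FTC : ∫ f = ⟪γ b - γ a, v⟫
  have hgder : ∀ s, HasDerivAt (fun t => ⟪γ t, v⟫) (f s) s := by
    intro s
    have h1 := ((hγdiff s).hasDerivAt).inner ℝ (hasDerivAt_const s v)
    simpa using h1
  have hFTC : (∫ s in a..b, f s) = ⟪γ b, v⟫ - ⟪γ a, v⟫ :=
    intervalIntegral.integral_eq_sub_of_hasDerivAt (fun x _ => hgder x)
      (hfcont.intervalIntegrable _ _)
  have hinner_sub : ⟪γ b, v⟫ - ⟪γ a, v⟫ = ⟪γ b - γ a, v⟫ := (inner_sub_left _ _ _).symm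
  have hvnorm : ‖v‖ = 1 := hunit s₀
  have hinner_le : ⟪γ b - γ a, v⟫ ≤ dist (γ a) (γ b) := by
    have h1 := real_inner_le_norm (γ b - γ a) v
    rw [hvnorm, mul_one] at h1
    rw [dist_eq_norm, ← norm_sub_rev]
    exact h1
  have hint_ge : Real.cos θ * (b - a) ≤ ∫ s in a..b, f s := by
    have h1 : (∫ _ in a..b, Real.cos θ) ≤ ∫ s in a..b, f s := by
      apply intervalIntegral.integral_mono_on hab
        (intervalIntegrable_const) (hfcont.intervalIntegrable _ _) hf_ge
    rw [intervalIntegral.integral_const, smul_eq_mul] at h1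
    linarith
  constructor
  · calc Real.cos θ * (b - a) ≤ ∫ s in a..b, f s := hint_ge
      _ = ⟪γ b - γ a, v⟫ := by rw [hFTC, hinner_sub]
      _ ≤ dist (γ a) (γ b) := hinner_le
  · intro hab'
    have hcosθ1 : Real.cos θ < 1 := by
      have h1 := Real.strictAntiOn_cos
        (Set.mem_Icc.mpr ⟨le_refl _, Real.pi_pos.le⟩)
        (Set.mem_Icc.mpr ⟨hθ₀.le, by linarith [Real.pi_pos]⟩) hθ₀
      rw [Real.cos_zero] at h1
      exact h1
    have hfs₀ : f s₀ = 1 := by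
      rw [hf_def]
      simp only
      rw [real_inner_self_eq_norm_mul_norm, hunit s₀, one_mul]
    have hstrict : (∫ _ in a..b, Real.cos θ) < ∫ s in a..b, f s := by
      apply intervalIntegral.integral_lt_integral_of_continuousOn_of_le_of_exists_lt hab'
        continuousOn_const hfcont.continuousOn
        (fun x hx => hf_ge x (Set.mem_Icc_of_Ioc hx))
      exact ⟨s₀, hs₀Icc, by rw [hfs₀]; exact hcosθ1⟩
    rw [intervalIntegral.integral_const, smul_eq_mul] at hstrict
    calc Real.cos θ * (b - a) < ∫ s in a..b, f s := by linarith
      _ = ⟪γ b - γ a, v⟫ := by rw [hFTC, hinner_sub]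
      _ ≤ dist (γ a) (γ b) := hinner_le
end

section
/- Tait–Kneser spiral lemma (nesting of osculating circles): let γ be a smooth unit-speed plane curve whose signed curvature k(s) is positive and strictly decreasing. Let ω(s) = γ(s) + (1/k(s))·N(s) be the center of curvature and r(s) = 1/k(s) the radius of curvature. Then for s₀ < s₁, |ω(s₁) − ω(s₀)| < r(s₁) − r(s₀); in particular, the osculating circle at s₀ lies strictly inside the open disc bounded by the osculating circle at s₁. -/
/-- Counterclockwise rotation of a plane vector by `π/2`. -/
noncomputable def rotCCW (v : EuclideanSpace ℝ (Fin 2)) : EuclideanSpace ℝ (Fin 2) :=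
  (WithLp.toLp 2 (![-(v 1), v 0] : Fin 2 → ℝ) : EuclideanSpace ℝ (Fin 2))

open Set MeasureTheory intervalIntegral
open scoped ContDiff

noncomputable def rotL : EuclideanSpace ℝ (Fin 2) →L[ℝ] EuclideanSpace ℝ (Fin 2) :=
  LinearMap.toContinuousLinearMap
  { toFun := rotCCW
    map_add' := by
      intro a b; ext i; fin_cases i <;>
        simp [rotCCW, PiLp.add_apply] <;> ring
    map_smul' := by
      intro c a; ext i; fin_cases i <;>
        simp [rotCCW, PiLp.smul_apply, smul_eq_mul] }

lemma rotL_apply (v : EuclideanSpace ℝ (Fin 2)) : rotL v = rotCCW v := rfl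

lemma norm_rotCCW (v : EuclideanSpace ℝ (Fin 2)) : ‖rotCCW v‖ = ‖v‖ := by
  rw [EuclideanSpace.norm_eq, EuclideanSpace.norm_eq]
  simp [rotCCW, Fin.sum_univ_two]
  ring_nf

lemma rotCCW_rotCCW (v : EuclideanSpace ℝ (Fin 2)) : rotCCW (rotCCW v) = -v := by
  ext i; fin_cases i <;> simp [rotCCW, PiLp.neg_apply]

lemma deriv_nonneg_of_monotone' {f : ℝ → ℝ} (hf : Monotone f) {f' x : ℝ}
    (h : HasDerivAt f f' x) : 0 ≤ f' := by
  have h1 : Filter.Tendsto (slope f x) (nhdsWithin x (Ioi x)) (nhds f') :=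
    (hasDerivAt_iff_tendsto_slope.mp h).mono_left
      (nhdsWithin_mono x (fun y hy => ne_of_gt hy))
  refine ge_of_tendsto h1 ?_
  filter_upwards [self_mem_nhdsWithin] with y hy
  rw [slope_def_field]
  exact div_nonneg (sub_nonneg.mpr (hf (le_of_lt hy))) (sub_nonneg.mpr (le_of_lt hy))

/-- Tait–Kneser spiral lemma: if the signed curvature `k` of a smooth unit-speed plane
curve `γ` is positive and strictly decreasing, then for `s₀ < s₁` the centers of
curvature `ω(s) = γ(s) + (1/k(s)) • N(s)` and radii `r(s) = 1/k(s)` satisfy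
`|ω(s₁) - ω(s₀)| < r(s₁) - r(s₀)`; in particular the osculating circle at `s₀` lies in
the open disc bounded by the osculating circle at `s₁`. -/
theorem tait_kneser_nested_osculating_circles
    (γ : ℝ → EuclideanSpace ℝ (Fin 2)) (k : ℝ → ℝ)
    (hγ : ContDiff ℝ (⊤ : ℕ∞) γ) (hunit : ∀ s, ‖deriv γ s‖ = 1)
    (hcurv : ∀ s, deriv (deriv γ) s = k s • rotCCW (deriv γ s))
    (hpos : ∀ s, 0 < k s) (hdec : StrictAnti k)
    (s₀ s₁ : ℝ) (h : s₀ < s₁) :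
    dist (γ s₁ + (1 / k s₁) • rotCCW (deriv γ s₁))
        (γ s₀ + (1 / k s₀) • rotCCW (deriv γ s₀)) < 1 / k s₁ - 1 / k s₀ ∧
      Metric.sphere (γ s₀ + (1 / k s₀) • rotCCW (deriv γ s₀)) (1 / k s₀) ⊆
        Metric.ball (γ s₁ + (1 / k s₁) • rotCCW (deriv γ s₁)) (1 / k s₁) := by
  classical
  have hγ' : ContDiff ℝ ∞ γ := hγ.of_le (by simp)
  set T : ℝ → EuclideanSpace ℝ (Fin 2) := deriv γ with hTdef
  have hT : ContDiff ℝ ∞ T := (contDiff_infty_iff_deriv.mp hγ').2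
  set N : ℝ → EuclideanSpace ℝ (Fin 2) := fun s => rotCCW (T s) with hNdef
  have hN : ContDiff ℝ ∞ N := by
    have hrw : N = fun s => rotL (T s) := rfl
    rw [hrw]; exact rotL.contDiff.comp hT
  have hNunit : ∀ s, ‖N s‖ = 1 := fun s => by
    simp only [hNdef]; rw [norm_rotCCW]; exact hunit s
  have hT' : ContDiff ℝ ∞ (deriv T) := (contDiff_infty_iff_deriv.mp hT).2
  have hTcurv : ∀ s, deriv T s = k s • N s := fun s => hcurv s
  -- k is smooth
  have hkval : k = fun s => (inner ℝ (deriv T s) (N s) : ℝ) := by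
    funext s
    rw [hTcurv s, real_inner_smul_left, real_inner_self_eq_norm_sq, hNunit s]
    ring
  have hk : ContDiff ℝ ∞ k := by
    rw [hkval]; exact hT'.inner ℝ hN
  have hkne : ∀ s, k s ≠ 0 := fun s => ne_of_gt (hpos s)
  set r : ℝ → ℝ := fun s => 1 / k s with hrdef
  have hr : ContDiff ℝ ∞ r := contDiff_const.div hk hkne
  have hrdiff : Differentiable ℝ r := hr.differentiable (by norm_num)
  have hrmono : StrictMono r := by
    intro a b hab
    simp only [hrdef]
    exact one_div_lt_one_div_of_lt (hpos b) (hdec hab)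
  -- derivative facts
  have hTd : ∀ s, HasDerivAt γ (T s) s :=
    fun s => (hγ'.differentiable (by norm_num) s).hasDerivAt
  have hTd' : ∀ s, HasDerivAt T (k s • N s) s := fun s => by
    have h1 := (hT.differentiable (by norm_num) s).hasDerivAt
    rwa [hTcurv s] at h1
  have hNd : ∀ s, HasDerivAt N (-(k s) • T s) s := fun s => by
    have h1 : HasDerivAt (fun t => rotL (T t)) (rotL (k s • N s)) s :=
      rotL.hasFDerivAt.comp_hasDerivAt s (hTd' s)
    have h2 : rotL (k s • N s) = -(k s) • T s := by
      rw [_root_.map_smul, rotL_apply]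
      simp only [hNdef]
      rw [rotCCW_rotCCW, smul_neg, neg_smul]
    rwa [h2] at h1
  set Ω : ℝ → EuclideanSpace ℝ (Fin 2) := fun s => γ s + r s • N s with hωdef
  have hωd : ∀ s, HasDerivAt Ω (deriv r s • N s) s := fun s => by
    have h1 : HasDerivAt (fun t => γ t + r t • N t)
        (T s + (r s • (-(k s) • T s) + deriv r s • N s)) s :=
      (hTd s).add (((hrdiff s).hasDerivAt).smul (hNd s))
    have h2 : T s + (r s • (-(k s) • T s) + deriv r s • N s) = deriv r s • N s := by
      have hrk : r s * k s = 1 := by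
        simp only [hrdef]; exact one_div_mul_cancel (hkne s)
      rw [smul_smul, mul_neg, hrk]
      module
    rwa [h2] at h1
  have hr'0 : ∀ s, 0 ≤ deriv r s := fun s =>
    deriv_nonneg_of_monotone' hrmono.monotone (hrdiff s).hasDerivAt
  have hrcont : Continuous (deriv r) := ((contDiff_infty_iff_deriv.mp hr).2).continuous
  have hNcont : Continuous N := hN.continuous
  have hrlt : r s₀ < r s₁ := hrmono h
  -- main distance estimate
  have key : dist (Ω s₁) (Ω s₀) < r s₁ - r s₀ := by
    rw [dist_eq_norm]
    set Δ : EuclideanSpace ℝ (Fin 2) := Ω s₁ - Ω s₀ with hΔdef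
    rcases eq_or_ne Δ 0 with hΔ | hΔ
    · rw [hΔ, norm_zero]; linarith
    · set u : EuclideanSpace ℝ (Fin 2) := (‖Δ‖⁻¹ : ℝ) • Δ with hudef
      have hu : ‖u‖ = 1 := norm_smul_inv_norm hΔ
      have hinner : (inner ℝ Δ u : ℝ) = ‖Δ‖ := by
        rw [hudef, real_inner_smul_right, real_inner_self_eq_norm_mul_norm]
        field_simp
      set g : ℝ → ℝ := fun s => deriv r s * (1 - (inner ℝ (N s) u : ℝ)) with hgdef
      have hgcont : Continuous g := by
        apply hrcont.mul
        exact continuous_const.sub (hNcont.inner continuous_const)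
      have hNu : ∀ s, (inner ℝ (N s) u : ℝ) ≤ 1 := fun s => by
        calc (inner ℝ (N s) u : ℝ) ≤ ‖N s‖ * ‖u‖ := real_inner_le_norm _ _
        _ = 1 := by rw [hNunit s, hu]; ring
      have hg0 : ∀ s, 0 ≤ g s := fun s =>
        mul_nonneg (hr'0 s) (by linarith [hNu s])
      -- find a point where g is positive
      have hgex : ∃ c ∈ Ioo s₀ s₁, 0 < g c := by
        obtain ⟨t, ht, htval⟩ := exists_hasDerivAt_eq_slope r (deriv r) h
          (hr.continuous.continuousOn) (fun x _ => (hrdiff x).hasDerivAt)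
        have htpos : 0 < deriv r t := by
          rw [htval]; exact div_pos (by linarith) (by linarith)
        have hopen : IsOpen {x | 0 < deriv r x} := isOpen_lt continuous_const hrcont
        obtain ⟨ε, hε, hball⟩ := Metric.isOpen_iff.mp hopen t htpos
        set a : ℝ := max s₀ (t - ε) with hadef
        set b : ℝ := min s₁ (t + ε) with hbdef
        have hta : a < t := max_lt ht.1 (by linarith)
        have htb : t < b := lt_min ht.2 (by linarith)
        have hJpos : ∀ x ∈ Ioo a b, 0 < deriv r x := by
          intro x hx
          apply hball
          rw [Metric.mem_ball, Real.dist_eq, abs_lt]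
          have h1 : t - ε ≤ a := le_max_right _ _
          have h2 : b ≤ t + ε := min_le_right _ _
          constructor
          · linarith [hx.1]
          · linarith [hx.2]
        have hJsub : Ioo a b ⊆ Ioo s₀ s₁ := fun x hx =>
          ⟨lt_of_le_of_lt (le_max_left _ _) hx.1, lt_of_lt_of_le hx.2 (min_le_left _ _)⟩
        by_contra hcon
        push_neg at hcon
        have hgz : ∀ x ∈ Ioo a b, g x = 0 := fun x hx =>
          le_antisymm (hcon x (hJsub hx)) (hg0 x)
        have hNeq : ∀ x ∈ Ioo a b, N x = u := by
          intro x hx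
          have hdr := hJpos x hx
          have h1 : (inner ℝ (N x) u : ℝ) = 1 := by
            have hz := hgz x hx
            simp only [hgdef] at hz
            rcases mul_eq_zero.mp hz with h' | h'
            · exact absurd h' (ne_of_gt hdr)
            · linarith
          have h2 : ‖N x - u‖ ^ 2 = 0 := by
            rw [norm_sub_sq_real, hNunit x, hu, h1]; ring
          have h3 : N x - u = 0 := by
            rwa [pow_eq_zero_iff (two_ne_zero), norm_eq_zero] at h2
          exact sub_eq_zero.mp h3
        have hEv : N =ᶠ[nhds t] fun _ => u := by
          filter_upwards [Ioo_mem_nhds hta htb] with x hx using hNeq x hx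
        have hD0 : deriv N t = 0 := by
          rw [hEv.deriv_eq, deriv_const]
        have hD1 : deriv N t = -(k t) • T t := (hNd t).deriv
        rw [hD0] at hD1
        have hcontra : (0 : ℝ) = k t := by
          have := congrArg norm hD1
          rw [norm_zero, norm_smul, Real.norm_eq_abs, abs_neg,
            abs_of_pos (hpos t), hunit t] at this
          linarith [this]
        exact absurd hcontra.symm (hkne t)
      -- integrals
      obtain ⟨c, hc, hcpos⟩ := hgex
      have hint_r : IntervalIntegrable (deriv r) volume s₀ s₁ :=
        hrcont.intervalIntegrable _ _
      have hint_rh : IntervalIntegrable (fun s => deriv r s * (inner ℝ (N s) u : ℝ))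
          volume s₀ s₁ :=
        (hrcont.mul (hNcont.inner continuous_const)).intervalIntegrable _ _
      have hg_int : IntervalIntegrable g volume s₀ s₁ := hgcont.intervalIntegrable _ _
      have hA : ∫ s in s₀..s₁, deriv r s = r s₁ - r s₀ :=
        integral_eq_sub_of_hasDerivAt (fun x _ => (hrdiff x).hasDerivAt) hint_r
      have hB : ∫ s in s₀..s₁, deriv r s * (inner ℝ (N s) u : ℝ) = (inner ℝ Δ u : ℝ) := by
        have hφ : ∀ x ∈ uIcc s₀ s₁, HasDerivAt (fun t => (inner ℝ (Ω t) u : ℝ))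
            (deriv r x * (inner ℝ (N x) u : ℝ)) x := by
          intro x _
          have h1 := (hωd x).inner ℝ (hasDerivAt_const x u)
          simpa only [inner_zero_right, zero_add, real_inner_smul_left] using h1
        rw [integral_eq_sub_of_hasDerivAt hφ hint_rh, hΔdef, inner_sub_left]
      have hgpos : 0 < ∫ s in s₀..s₁, g s := by
        rw [integral_pos_iff_support_of_nonneg_ae (ae_of_all _ hg0) hg_int]
        refine ⟨h, ?_⟩
        have hopen : IsOpen ({x | 0 < g x} ∩ Ioo s₀ s₁) :=
          (isOpen_lt continuous_const hgcont).inter isOpen_Ioo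
        have hmeas := hopen.measure_pos volume ⟨c, hcpos, hc⟩
        refine lt_of_lt_of_le hmeas (measure_mono ?_)
        rintro x ⟨hx1, hx2⟩
        exact ⟨ne_of_gt hx1, hx2.1, le_of_lt hx2.2⟩
      have hsplit : (∫ s in s₀..s₁, g s)
          = (r s₁ - r s₀) - (inner ℝ Δ u : ℝ) := by
        have hfun : g = fun s => deriv r s - deriv r s * (inner ℝ (N s) u : ℝ) := by
          funext s; simp only [hgdef]; ring
        rw [hfun, integral_sub hint_r hint_rh, hA, hB]
      rw [← hinner]
      linarith [hgpos, hsplit]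
  constructor
  · exact key
  · intro x hx
    rw [Metric.mem_sphere] at hx
    rw [Metric.mem_ball]
    have htri := dist_triangle x (Ω s₀) (Ω s₁)
    have hcomm : dist (Ω s₀) (Ω s₁) = dist (Ω s₁) (Ω s₀) := dist_comm _ _
    have hx' : dist x (Ω s₀) = r s₀ := hx
    calc dist x (Ω s₁) ≤ dist x (Ω s₀) + dist (Ω s₀) (Ω s₁) := htri
      _ = r s₀ + dist (Ω s₁) (Ω s₀) := by rw [hx', hcomm]
      _ < r s₀ + (r s₁ - r s₀) := by linarith [key]
      _ = r s₁ := by ring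
end

section
/- Alexandrov's lemma: let p, x, y, z and p', x', y', z' be points in the Euclidean plane such that |p−x|=|p'−x'|, |x−y|=|x'−y'|, |y−z|=|y'−z'|, |z−p|=|z'−p'|, and y' lies on the line segment [x', z']. Then |p−y| ≥ |p'−y'| if and only if the angle ∠(y; p, x) + ∠(y; p, z) ≤ π, and |p−y| ≤ |p'−y'| if and only if ∠(y; p, x) + ∠(y; p, z) ≥ π. -/
/-!
By the law of cosines at `y`, the weighted sum `|y - z| |p - x|² + |x - y| |z - p|²` equals the
right-hand side of Stewart's theorem for the cevian `p y` minus
`2 |p - y| |x - y| |y - z| (cos ∠(y; p, x) + cos ∠(y; p, z))`. For the straightened quadrilateral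
`p' x' y' z'` Stewart's theorem holds exactly, so with equal sides
`|p' - y'|² - |p - y|²` has the sign of `-(cos ∠(y; p, x) + cos ∠(y; p, z))`, and since cosine is
decreasing on `[0, π]`, that sum of cosines is nonnegative iff the angle sum is at most `π`.
-/

open EuclideanGeometry Real Set

theorem Real.cos_add_cos_nonneg_iff {A B : ℝ} (hA : A ∈ Icc 0 π) (hB : B ∈ Icc 0 π) :
    0 ≤ cos A + cos B ↔ A + B ≤ π := by
  have hπB : π - B ∈ Icc 0 π := ⟨by linarith [hB.2], by linarith [hB.1]⟩
  rw [← neg_le_iff_add_nonneg, ← cos_pi_sub, strictAntiOn_cos.le_iff_ge hπB hA, le_sub_iff_add_le]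

theorem Real.cos_add_cos_nonpos_iff {A B : ℝ} (hA : A ∈ Icc 0 π) (hB : B ∈ Icc 0 π) :
    cos A + cos B ≤ 0 ↔ π ≤ A + B := by
  have hπA : π - A ∈ Icc 0 π := ⟨by linarith [hA.2], by linarith [hA.1]⟩
  rw [← le_neg_iff_add_nonpos_left, ← cos_pi_sub, strictAntiOn_cos.le_iff_ge hB hπA,
    sub_le_iff_le_add']

section

variable {V P : Type*} [NormedAddCommGroup V] [InnerProductSpace ℝ V] [MetricSpace P]
  [NormedAddTorsor V P]

theorem EuclideanGeometry.dist_sq_mul_dist_add_dist_sq_mul_dist_eq_sub_cos (a b c p : P) :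
    dist a b ^ 2 * dist c p + dist a c ^ 2 * dist b p =
      (dist b p + dist c p) * (dist a p ^ 2 + dist b p * dist c p) -
        2 * dist a p * dist b p * dist c p * (cos (∠ a p b) + cos (∠ a p c)) := by
  rw [pow_two, pow_two, law_cos a p b, law_cos a p c]
  ring

theorem Wbtw.dist_sq_mul_dist_add_dist_sq_mul_dist {b p c : P} (h : Wbtw ℝ b p c) (a : P) :
    dist a b ^ 2 * dist c p + dist a c ^ 2 * dist b p =
      dist b c * (dist a p ^ 2 + dist b p * dist c p) := by
  rcases eq_or_ne p b with rfl | hpb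
  · simp [dist_comm c p, mul_comm]
  rcases eq_or_ne p c with rfl | hpc
  · simp [dist_comm b p, mul_comm]
  exact EuclideanGeometry.dist_sq_mul_dist_add_dist_sq_mul_dist a b c p
    (angle_eq_pi_iff_sbtw.2 ⟨h, hpb, hpc⟩)

end

/-- Alexandrov's lemma: given two quadrilaterals `p x y z` and `p' x' y' z'` in the plane
with equal corresponding sides, where `y'` lies on the segment `[x', z']`, the comparison
`|p - y| ≥ |p' - y'|` holds iff `∠(y; p, x) + ∠(y; p, z) ≤ π`, and
`|p - y| ≤ |p' - y'|` holds iff `∠(y; p, x) + ∠(y; p, z) ≥ π`. -/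
theorem alexandrov_lemma
    (p x y z p' x' y' z' : EuclideanSpace ℝ (Fin 2))
    (h₁ : dist p x = dist p' x') (h₂ : dist x y = dist x' y')
    (h₃ : dist y z = dist y' z') (h₄ : dist z p = dist z' p')
    (hy' : y' ∈ segment ℝ x' z')
    (hp : p ≠ y) (hx : x ≠ y) (hz : z ≠ y) :
    (dist p' y' ≤ dist p y ↔ ∠ p y x + ∠ p y z ≤ Real.pi) ∧
    (dist p y ≤ dist p' y' ↔ Real.pi ≤ ∠ p y x + ∠ p y z) := by
  have hbtw : Wbtw ℝ x' y' z' := mem_segment_iff_wbtw.1 hy'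
  have key : 2 * dist p y * dist x y * dist y z * (cos (∠ p y x) + cos (∠ p y z)) =
      (dist x y + dist y z) * (dist p y ^ 2 - dist p' y' ^ 2) := by
    have stewart := hbtw.dist_sq_mul_dist_add_dist_sq_mul_dist p'
    have defect := dist_sq_mul_dist_add_dist_sq_mul_dist_eq_sub_cos p x z y
    rw [← hbtw.dist_add_dist] at stewart
    simp only [dist_comm z' y', dist_comm p' z', dist_comm z y, dist_comm p z] at stewart defect
    rw [← h₁, ← h₂, ← h₃, ← h₄] at stewart
    linear_combination defect - stewart
  have hk : 0 < 2 * dist p y * dist x y * dist y z := by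
    have := dist_pos.2 hp; have := dist_pos.2 hx; have := dist_pos.2 hz.symm; positivity
  have hm : 0 < dist x y + dist y z := by have := dist_pos.2 hx; positivity
  have hcos_nonneg : 0 ≤ cos (∠ p y x) + cos (∠ p y z) ↔ dist p' y' ≤ dist p y := by
    rw [← mul_nonneg_iff_of_pos_left hk, key, mul_nonneg_iff_of_pos_left hm, sub_nonneg,
      sq_le_sq₀ dist_nonneg dist_nonneg]
  have hcos_nonpos : cos (∠ p y x) + cos (∠ p y z) ≤ 0 ↔ dist p y ≤ dist p' y' := by
    rw [← neg_nonneg, ← mul_nonneg_iff_of_pos_left hk, mul_neg, key, ← mul_neg,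
      mul_nonneg_iff_of_pos_left hm, neg_sub, sub_nonneg, sq_le_sq₀ dist_nonneg dist_nonneg]
  have hA : ∠ p y x ∈ Icc 0 π := ⟨angle_nonneg _ _ _, angle_le_pi _ _ _⟩
  have hB : ∠ p y z ∈ Icc 0 π := ⟨angle_nonneg _ _ _, angle_le_pi _ _ _⟩
  exact ⟨hcos_nonneg.symm.trans (cos_add_cos_nonneg_iff hA hB),
    hcos_nonpos.symm.trans (cos_add_cos_nonpos_iff hA hB)⟩
end

section
/- DNA inequality (Chakerian): let γ : [0,ℓ] → ℝ³ be a smooth closed unit-speed curve lying in the closed unit ball (|γ(s)| ≤ 1 for all s, γ(0)=γ(ℓ), γ'(0)=γ'(ℓ)). Then the total curvature of γ is at least its length: ∫₀^ℓ |γ''(s)| ds ≥ ℓ. -/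
/-- DNA inequality (Chakerian): a smooth closed unit-speed curve `γ : [0,ℓ] → ℝ³` lying
in the closed unit ball has total curvature at least its length:
`∫₀^ℓ ‖γ''(s)‖ ds ≥ ℓ`. -/
theorem dna_inequality
    (ℓ : ℝ) (hℓ : 0 < ℓ)
    (γ : ℝ → EuclideanSpace ℝ (Fin 3)) (hγ : ContDiff ℝ (⊤ : ℕ∞) γ)
    (hunit : ∀ s, ‖deriv γ s‖ = 1)
    (hball : ∀ s ∈ Set.Icc (0:ℝ) ℓ, ‖γ s‖ ≤ 1)
    (hclosed : γ 0 = γ ℓ) (hclosed' : deriv γ 0 = deriv γ ℓ) :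
    ℓ ≤ ∫ s in (0:ℝ)..ℓ, ‖deriv (deriv γ) s‖ := by
  have hγd : Differentiable ℝ γ := hγ.differentiable (by simp)
  have hgi : ContDiff ℝ ((⊤ : ℕ∞) : WithTop ℕ∞) γ := hγ.of_le (by simp)
  have hγ' : ContDiff ℝ ((⊤ : ℕ∞) : WithTop ℕ∞) (deriv γ) := (contDiff_infty_iff_deriv.mp hgi).2
  have hγ'd : Differentiable ℝ (deriv γ) := hγ'.differentiable (by simp)
  have hγ'' : Continuous (deriv (deriv γ)) := (contDiff_infty_iff_deriv.mp hγ').2.continuous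
  set f : ℝ → ℝ := fun s => inner ℝ (γ s) (deriv γ s) with hf
  have hfd : ∀ s, HasDerivAt f (1 + inner ℝ (γ s) (deriv (deriv γ) s)) s := by
    intro s
    have h1 : HasDerivAt γ (deriv γ s) s := (hγd s).hasDerivAt
    have h2 : HasDerivAt (deriv γ) (deriv (deriv γ) s) s := (hγ'd s).hasDerivAt
    have := h1.inner ℝ h2
    refine this.congr_deriv ?_
    have : (inner ℝ (deriv γ s) (deriv γ s) : ℝ) = 1 := by
      rw [real_inner_self_eq_norm_sq, hunit s]; norm_num
    rw [this]; ring
  have hcont : Continuous fun s => (1 : ℝ) + inner ℝ (γ s) (deriv (deriv γ) s) := by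
    exact continuous_const.add (hγ.continuous.inner hγ'')
  have hint : (∫ s in (0:ℝ)..ℓ, (1 + inner ℝ (γ s) (deriv (deriv γ) s) : ℝ)) = f ℓ - f 0 :=
    intervalIntegral.integral_eq_sub_of_hasDerivAt (fun s _ => hfd s)
      (hcont.intervalIntegrable 0 ℓ)
  have hf0 : f ℓ - f 0 = 0 := by simp [hf, hclosed, hclosed']
  have hint1 : (∫ s in (0:ℝ)..ℓ, (1 + inner ℝ (γ s) (deriv (deriv γ) s) : ℝ))
      = ℓ + ∫ s in (0:ℝ)..ℓ, (inner ℝ (γ s) (deriv (deriv γ) s) : ℝ) := by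
    rw [intervalIntegral.integral_add (intervalIntegrable_const)
      ((hγ.continuous.inner hγ'').intervalIntegrable 0 ℓ)]
    simp
  have key : ℓ = ∫ s in (0:ℝ)..ℓ, (-(inner ℝ (γ s) (deriv (deriv γ) s)) : ℝ) := by
    rw [intervalIntegral.integral_neg]
    have := hint.trans hf0
    rw [hint1] at this
    linarith
  refine le_of_eq key |>.trans ?_
  apply intervalIntegral.integral_mono_on hℓ.le
  · exact ((hγ.continuous.inner hγ'').neg).intervalIntegrable 0 ℓ
  · exact (hγ''.norm).intervalIntegrable 0 ℓ
  · intro s hs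
    calc -(inner ℝ (γ s) (deriv (deriv γ) s) : ℝ) ≤ ‖γ s‖ * ‖deriv (deriv γ) s‖ := by
          have := abs_real_inner_le_norm (γ s) (deriv (deriv γ) s)
          have h2 := neg_abs_le (inner ℝ (γ s) (deriv (deriv γ) s) : ℝ)
          linarith
      _ ≤ 1 * ‖deriv (deriv γ) s‖ :=
          mul_le_mul_of_nonneg_right (hball s hs) (norm_nonneg _)
      _ = ‖deriv (deriv γ) s‖ := one_mul _
end
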